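/- arXiv:1909.09626 — 11 statements merged into one kernel-verified Lean document; each statement's English description precedes it below -/
import Mathlib

section
/- Let q and p be coprime positive integers and φ an integer with φ^p ≡ 1 (mod q). Then the group Z_q ⋊_φ Z_p is effectively cyclic: for every pair of commuting elements g, h of Z_q ⋊_φ Z_p there exists a cyclic subgroup containing both g and h. -/
/-!
`N = ⟨a⟩` is a cyclic normal subgroup of order `q` with cyclic quotient `G ⧸ N = ⟨A N⟩` of
order `p`. If `g` and `h` commute, the subgroup `H = ⟨g, h⟩` is abelian; `H ∩ N` is cyclic of
order dividing `q` and `H ⧸ (H ∩ N)` embeds in `G ⧸ N`, so it is cyclic of order dividing `p`.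
An abelian extension of a cyclic group by a cyclic group of coprime order is cyclic.
-/

namespace Subgroup

variable {G : Type*} [Group G]

open scoped IsMulCommutative in
theorem isCyclic_of_isMulCommutative_of_coprime_index {N : Subgroup G} [N.Normal] [IsCyclic N]
    [IsCyclic (G ⧸ N)] (hN : (Nat.card N).Coprime N.index) (H : Subgroup G)
    [IsMulCommutative H] : IsCyclic H := by
  let f : H →* G ⧸ N := (QuotientGroup.mk' N).comp H.subtype
  let ι : f.ker →* N := (H.subtype.comp f.ker.subtype).codRestrict N fun x =>
    (QuotientGroup.eq_one_iff _).mp x.2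
  have hι : Function.Injective ι := fun x y hxy =>
    Subtype.ext (Subtype.ext (congrArg Subtype.val hxy :))
  have := isCyclic_of_injective ι hι
  refine Group.isCyclic_of_coprime_card_range_card_ker f ?_
  exact (hN.coprime_dvd_left (card_dvd_of_injective ι hι)).coprime_dvd_right
    (card_subgroup_dvd_card f.range)

theorem closure_pair_eq_top_of_card_eq_mul [Finite G] {a b : G}
    (hab : (orderOf a).Coprime (orderOf b)) (hcard : Nat.card G = orderOf a * orderOf b) :
    closure {a, b} = ⊤ := by
  refine eq_top_of_card_eq _ (Nat.dvd_antisymm (card_subgroup_dvd_card _) ?_)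
  rw [hcard]
  exact hab.mul_dvd_of_dvd_of_dvd (orderOf_dvd_natCard _ (subset_closure (by simp)))
    (orderOf_dvd_natCard _ (subset_closure (by simp)))

theorem zpowers_normal_of_conj_mem [Finite G] {a b : G} (hgen : closure {a, b} = ⊤)
    (hconj : b * a * b⁻¹ ∈ zpowers a) : (zpowers a).Normal := by
  rw [← normalizer_eq_top_iff, eq_top_iff, ← hgen, closure_le]
  rintro x (rfl | rfl)
  · exact le_normalizer (mem_zpowers x)
  · refine mem_normalizer_fintype fun n hn => ?_
    obtain ⟨k, rfl⟩ := mem_zpowers_iff.mp hn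
    rw [← conj_zpow]
    exact zpow_mem hconj k

theorem isCyclic_quotient_zpowers {a b : G} [(zpowers a).Normal] (hgen : closure {a, b} = ⊤) :
    IsCyclic (G ⧸ zpowers a) := by
  refine isCyclic_iff_exists_zpowers_eq_top.mpr ⟨b, ?_⟩
  have hmk_a : (QuotientGroup.mk' (zpowers a)) a = 1 :=
    (QuotientGroup.eq_one_iff a).mpr (mem_zpowers a)
  rw [← map_top_of_surjective _ (QuotientGroup.mk'_surjective (zpowers a)), ← hgen,
    MonoidHom.map_closure, Set.image_pair, hmk_a, closure_insert_one]
  exact zpowers_eq_closure _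

end Subgroup

open Subgroup in
theorem semidirect_product_effectively_cyclic_general
    (q p : ℕ) (hq : 0 < q) (hqp : Nat.Coprime q p)
    (φ : ℤ)
    (G : Type*) [Group G] [Fintype G] (a A : G)
    (hcard : Fintype.card G = q * p)
    (ha : orderOf a = q) (hA : orderOf A = p)
    (hrel : A * a * A⁻¹ = a ^ φ) :
    ∀ g h : G, g * h = h * g → ∃ C : Subgroup G, IsCyclic ↥C ∧ g ∈ C ∧ h ∈ C := by
  intro g h hgh
  have hgen : closure {a, A} = ⊤ :=
    closure_pair_eq_top_of_card_eq_mul (ha ▸ hA ▸ hqp)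
      (by rw [Nat.card_eq_fintype_card, hcard, ha, hA])
  have := zpowers_normal_of_conj_mem hgen (hrel ▸ zpow_mem (mem_zpowers a) φ)
  have := isCyclic_quotient_zpowers hgen
  have hindex : (zpowers a).index = p := by
    have := (zpowers a).index_mul_card
    rw [Nat.card_zpowers, ha, Nat.card_eq_fintype_card, hcard, mul_comm q p] at this
    exact Nat.eq_of_mul_eq_mul_right hq this
  have := isMulCommutative_closure (k := {g, h}) (by
    rintro x (rfl | rfl) y (rfl | rfl) <;> first | rfl | exact hgh | exact hgh.symm)
  refine ⟨closure {g, h}, ?_, subset_closure (by simp), subset_closure (by simp)⟩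
  exact isCyclic_of_isMulCommutative_of_coprime_index
    (by rwa [Nat.card_zpowers, ha, hindex]) _

/-- Let `q`, `p` be coprime positive integers and `φ` an integer with `φ ^ p ≡ 1 (mod q)`.
The group `Z_q ⋊_φ Z_p` (here characterized abstractly: a group of order `q * p` generated
by elements `a`, `A` with `orderOf a = q`, `orderOf A = p` and `A * a * A⁻¹ = a ^ φ`;
since the orders of `a` and `A` are coprime and `|G| = q * p`, every element of `G` is of
the form `a ^ i * A ^ I`, so these data pin down the semidirect product) is effectively
cyclic: any two commuting elements lie in a common cyclic subgroup. -/
theorem semidirect_product_effectively_cyclic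
    (q p : ℕ) (hq : 0 < q) (hp : 0 < p) (hqp : Nat.Coprime q p)
    (φ : ℤ) (hφ : φ ^ p ≡ 1 [ZMOD (q : ℤ)])
    (G : Type*) [Group G] [Fintype G] (a A : G)
    (hcard : Fintype.card G = q * p)
    (ha : orderOf a = q) (hA : orderOf A = p)
    (hrel : A * a * A⁻¹ = a ^ φ) :
    ∀ g h : G, g * h = h * g → ∃ C : Subgroup G, IsCyclic ↥C ∧ g ∈ C ∧ h ∈ C :=
  semidirect_product_effectively_cyclic_general q p hq hqp φ G a A hcard ha hA hrel
end

section
/- Let q be a prime, p a positive integer coprime to q, φ an integer with φ^p ≡ 1 (mod q), and let r be the multiplicative order of φ modulo q (so r divides p, and r divides q − 1). Then the number of conjugacy classes of G = Z_q ⋊_φ Z_p equals p + (q − 1)·p / r². -/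
lemma aux_count_lin {F : Type*} [Field F] [Fintype F] [DecidableEq F] (c d : F) :
    Fintype.card {z : F × F // c * z.1 = d * z.2}
      = if c = 0 ∧ d = 0 then Fintype.card F ^ 2 else Fintype.card F := by
  split_ifs with h
  · obtain ⟨rfl, rfl⟩ := h
    rw [Fintype.card_congr (Equiv.subtypeUnivEquiv (by simp))]
    simp [sq]
  · by_cases hc : c = 0
    · subst hc
      have hd : d ≠ 0 := fun h0 => h ⟨rfl, h0⟩
      refine Fintype.card_congr ⟨fun z => z.1.1, fun i => ⟨(i, 0), by simp⟩, ?_, fun i => rfl⟩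
      rintro ⟨⟨i, j⟩, hz⟩
      simp only [zero_mul] at hz
      have hj : j = 0 := by
        rcases mul_eq_zero.mp hz.symm with h1 | h1
        · exact absurd h1 hd
        · exact h1
      subst hj; rfl
    · refine Fintype.card_congr ⟨fun z => z.1.2,
        fun j => ⟨(c⁻¹ * (d * j), j), by field_simp⟩, ?_, fun j => rfl⟩
      rintro ⟨⟨i, j⟩, hz⟩
      have hi : i = c⁻¹ * (d * j) := by
        field_simp
        linear_combination hz
      subst hi; rfl

lemma aux_count_dvd (p r : ℕ) [NeZero p] (hr : 0 < r) (hrp : r ∣ p) :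
    (Finset.univ.filter (fun I : ZMod p => r ∣ I.val)).card = p / r := by
  rw [← Finset.card_range (p / r)]
  have hp0 : 0 < p := Nat.pos_of_ne_zero (NeZero.ne p)
  apply Finset.card_bij' (fun I _ => I.val / r) (fun k _ => ((k * r : ℕ) : ZMod p))
  · intro I hI
    simp only [Finset.mem_filter, Finset.mem_univ, true_and] at hI
    simp only [Finset.mem_range]
    have hIv : I.val < p := ZMod.val_lt I
    obtain ⟨k, hk⟩ := hI
    obtain ⟨m, hm⟩ := hrp
    rw [hk, hm] at hIv ⊢
    rw [Nat.mul_div_cancel_left _ hr, Nat.mul_div_cancel_left _ hr]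
    exact lt_of_mul_lt_mul_left hIv (le_of_lt hr)
  · intro k hk
    simp only [Finset.mem_range] at hk
    simp only [Finset.mem_filter, Finset.mem_univ, true_and]
    have hlt : k * r < p := by
      calc k * r < p / r * r := (Nat.mul_lt_mul_right hr).mpr hk
      _ = p := Nat.div_mul_cancel hrp
    rw [ZMod.val_natCast_of_lt hlt]
    exact ⟨k, (Nat.mul_comm k r)⟩
  · intro I hI
    simp only [Finset.mem_filter, Finset.mem_univ, true_and] at hI
    rw [Nat.div_mul_cancel hI]
    exact ZMod.natCast_rightInverse I
  · intro k hk
    simp only [Finset.mem_range] at hk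
    have hlt : k * r < p := by
      calc k * r < p / r * r := (Nat.mul_lt_mul_right hr).mpr hk
      _ = p := Nat.div_mul_cancel hrp
    rw [ZMod.val_natCast_of_lt hlt, Nat.mul_div_cancel _ hr]

/-- Let `q` be a prime, `p` a positive integer coprime to `q`, `φ` an integer with
`φ^p ≡ 1 (mod q)`, and `r` the multiplicative order of `φ` modulo `q` (so `r ∣ p` and
`r ∣ q − 1`).  For `G = Z_q ⋊_φ Z_p` (characterized abstractly: a group of order `q * p`
with elements `a`, `A` of orders `q`, `p` and `A a A⁻¹ = a^φ`), the number of conjugacy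
classes of `G` equals `p + (q − 1)·p / r²`. -/
theorem card_conjClasses_semidirect_product
    (q p : ℕ) (hq : q.Prime) (hp : 0 < p) (hqp : Nat.Coprime q p)
    (φ : ℤ) (hφp : φ ^ p ≡ 1 [ZMOD (q : ℤ)])
    (r : ℕ) (hr : r = orderOf (φ : ZMod q)) (hrp : r ∣ p) (hrq : r ∣ q - 1)
    (G : Type*) [Group G] [Fintype G] (a A : G)
    (hcard : Fintype.card G = q * p)
    (ha : orderOf a = q) (hA : orderOf A = p)
    (hrel : A * a * A⁻¹ = a ^ φ) :
    Nat.card (ConjClasses G) = p + (q - 1) * p / r ^ 2 := by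
  classical
  haveI : NeZero p := ⟨hp.ne'⟩
  haveI : NeZero q := ⟨hq.pos.ne'⟩
  have hq2 : 2 ≤ q := hq.two_le
  set u : ZMod q := (φ : ZMod q) with hu
  -- φ^p = 1 in ZMod q
  have hφ1 : u ^ p = 1 := by
    have h1 := (ZMod.intCast_eq_intCast_iff (φ ^ p) 1 q).mpr hφp
    push_cast at h1
    exact h1
  have hr0 : 0 < r := by
    rw [hr]
    exact (isOfFinOrder_iff_pow_eq_one.mpr ⟨p, hp, hφ1⟩).orderOf_pos
  -- conjugation formulas
  have hconj1 : ∀ m : ℤ, A * a ^ m * A⁻¹ = a ^ (φ * m) := by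
    intro m
    have h1 : A * a ^ m * A⁻¹ = (MulAut.conj A) (a ^ m) := by
      simp [MulAut.conj_apply, mul_assoc]
    rw [h1, map_zpow, MulAut.conj_apply, hrel, ← zpow_mul, mul_comm]
  have hconj : ∀ (K : ℕ) (m : ℤ), A ^ K * a ^ m * (A ^ K)⁻¹ = a ^ (φ ^ K * m) := by
    intro K
    induction K with
    | zero => intro m; simp
    | succ K ih =>
      intro m
      have h2 : A ^ (K + 1) = A * A ^ K := by rw [pow_succ']
      rw [h2, mul_inv_rev]
      calc A * A ^ K * a ^ m * ((A ^ K)⁻¹ * A⁻¹)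
          = A * (A ^ K * a ^ m * (A ^ K)⁻¹) * A⁻¹ := by group
        _ = A * a ^ (φ ^ K * m) * A⁻¹ := by rw [ih]
        _ = a ^ (φ * (φ ^ K * m)) := hconj1 _
        _ = a ^ (φ ^ (K + 1) * m) := by ring_nf
  -- the parametrization
  set f : ZMod q × ZMod p → G := fun x => a ^ (x.1.val : ℤ) * A ^ x.2.val with hf
  have hmul : ∀ x y : ZMod q × ZMod p,
      f x * f y = a ^ ((x.1.val : ℤ) + φ ^ x.2.val * y.1.val) * A ^ (x.2.val + y.2.val) := by
    intro x y
    have h2 : A ^ x.2.val * a ^ (y.1.val : ℤ)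
        = a ^ (φ ^ x.2.val * (y.1.val : ℤ)) * A ^ x.2.val := by
      rw [← hconj x.2.val (y.1.val : ℤ)]
      group
    calc f x * f y = a ^ (x.1.val : ℤ) * (A ^ x.2.val * a ^ (y.1.val : ℤ)) * A ^ y.2.val := by
          simp only [hf]; group
      _ = a ^ (x.1.val : ℤ) * (a ^ (φ ^ x.2.val * (y.1.val : ℤ)) * A ^ x.2.val) * A ^ y.2.val := by
          rw [h2]
      _ = a ^ ((x.1.val : ℤ) + φ ^ x.2.val * y.1.val) * A ^ (x.2.val + y.2.val) := by
          rw [zpow_add, pow_add]; group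
  -- equality of powers of a
  have hkey : ∀ m n : ℤ, a ^ m = a ^ n ↔ ((m : ZMod q) = (n : ZMod q)) := by
    intro m n
    rw [ZMod.intCast_eq_intCast_iff, Int.modEq_iff_dvd]
    constructor
    · intro h
      have h1 : a ^ (n - m) = 1 := by rw [zpow_sub, h, mul_inv_cancel]
      have h2 := orderOf_dvd_iff_zpow_eq_one.mpr h1
      rwa [ha] at h2
    · intro h
      rw [← ha] at h
      have h1 : a ^ (n - m) = 1 := orderOf_dvd_iff_zpow_eq_one.mp h
      have h2 : a ^ n = a ^ (n - m) * a ^ m := by rw [← zpow_add]; ring_nf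
      rw [h2, h1, one_mul]
  -- similarly for A
  have hkeyA : ∀ m n : ℤ, A ^ m = A ^ n ↔ ((m : ZMod p) = (n : ZMod p)) := by
    intro m n
    rw [ZMod.intCast_eq_intCast_iff, Int.modEq_iff_dvd]
    constructor
    · intro h
      have h1 : A ^ (n - m) = 1 := by rw [zpow_sub, h, mul_inv_cancel]
      have h2 := orderOf_dvd_iff_zpow_eq_one.mpr h1
      rwa [hA] at h2
    · intro h
      rw [← hA] at h
      have h1 : A ^ (n - m) = 1 := orderOf_dvd_iff_zpow_eq_one.mp h
      have h2 : A ^ n = A ^ (n - m) * A ^ m := by rw [← zpow_add]; ring_nf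
      rw [h2, h1, one_mul]
  -- injectivity of f
  have hinj : Function.Injective f := by
    rintro ⟨i, I⟩ ⟨j, J⟩ h
    simp only [hf] at h
    have hw : a ^ ((i.val : ℤ) - j.val) = A ^ ((J.val : ℤ) - I.val) := by
      rw [zpow_natCast, zpow_natCast] at h
      have h2 : (a ^ j.val)⁻¹ * (a ^ i.val * A ^ I.val) * (A ^ I.val)⁻¹
          = (a ^ j.val)⁻¹ * (a ^ j.val * A ^ J.val) * (A ^ I.val)⁻¹ := by rw [h]
      rw [zpow_sub, zpow_sub, zpow_natCast, zpow_natCast, zpow_natCast, zpow_natCast]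
      calc a ^ i.val * (a ^ j.val)⁻¹
          = (a ^ j.val)⁻¹ * (a ^ i.val * A ^ I.val) * (A ^ I.val)⁻¹ := by
            rw [(Commute.pow_pow_self a i.val j.val).inv_right.eq]; group
        _ = (a ^ j.val)⁻¹ * (a ^ j.val * A ^ J.val) * (A ^ I.val)⁻¹ := h2
        _ = A ^ J.val * (A ^ I.val)⁻¹ := by group
    have haq : a ^ (q : ℤ) = 1 := by
      rw [zpow_natCast, ← ha, pow_orderOf_eq_one]
    have hAp : A ^ (p : ℤ) = 1 := by
      rw [zpow_natCast, ← hA, pow_orderOf_eq_one]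
    set w : G := a ^ ((i.val : ℤ) - j.val) with hwdef
    have hwq : w ^ q = 1 := by
      rw [hwdef, ← zpow_natCast, ← zpow_mul, mul_comm, zpow_mul, haq, one_zpow]
    have hwp : w ^ p = 1 := by
      rw [hw, ← zpow_natCast, ← zpow_mul, mul_comm, zpow_mul, hAp, one_zpow]
    have hw1 : w = 1 := by
      have h1 : orderOf w ∣ Nat.gcd q p :=
        Nat.dvd_gcd (orderOf_dvd_of_pow_eq_one hwq) (orderOf_dvd_of_pow_eq_one hwp)
      have h2 : orderOf w = 1 := Nat.dvd_one.mp (hqp ▸ h1)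
      exact orderOf_eq_one_iff.mp h2
    have hij : i = j := by
      have h1 : a ^ ((i.val : ℤ) - j.val) = a ^ (0 : ℤ) := by
        rw [zpow_zero]; exact hw1
      have h2 := (hkey _ _).mp h1
      push_cast at h2
      have h3 : (i.val : ZMod q) = (j.val : ZMod q) := by linear_combination h2
      rwa [ZMod.natCast_rightInverse i, ZMod.natCast_rightInverse j] at h3
    have hIJ : I = J := by
      have h1 : A ^ ((J.val : ℤ) - I.val) = A ^ (0 : ℤ) := by
        rw [zpow_zero, ← hw]; exact hw1
      have h2 := (hkeyA _ _).mp h1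
      push_cast at h2
      have h3 : (I.val : ZMod p) = (J.val : ZMod p) := by linear_combination -h2
      rwa [ZMod.natCast_rightInverse I, ZMod.natCast_rightInverse J] at h3
    rw [hij, hIJ]
  -- bijectivity
  have hbij : Function.Bijective f := by
    rw [Fintype.bijective_iff_injective_and_card]
    exact ⟨hinj, by simp [hcard, ZMod.card]⟩
  -- commuting criterion
  have hcommute : ∀ x y : ZMod q × ZMod p,
      Commute (f x) (f y) ↔ (1 - u ^ y.2.val) * x.1 = (1 - u ^ x.2.val) * y.1 := by
    intro x y
    rw [Commute, SemiconjBy, hmul x y, hmul y x, add_comm y.2.val x.2.val, mul_left_inj,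
      hkey]
    push_cast
    rw [ZMod.natCast_rightInverse x.1, ZMod.natCast_rightInverse y.1]
    constructor <;> intro h <;> linear_combination h
  -- counting commuting pairs
  haveI := Fact.mk hq
  set e : (ZMod q × ZMod p) ≃ G := Equiv.ofBijective f hbij with he
  set C : (ZMod p × ZMod p) → (ZMod q × ZMod q) → Prop :=
    fun v ij => (1 - u ^ v.2.val) * ij.1 = (1 - u ^ v.1.val) * ij.2 with hC
  have hNcard : Nat.card {z : G × G // Commute z.1 z.2}
      = Fintype.card {z : (ZMod q × ZMod p) × (ZMod q × ZMod p) //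
          (1 - u ^ z.2.2.val) * z.1.1 = (1 - u ^ z.1.2.val) * z.2.1} := by
    rw [Nat.card_eq_fintype_card]
    refine Fintype.card_congr (Equiv.subtypeEquiv (Equiv.prodCongr e e).symm (fun z => ?_))
    show Commute z.1 z.2 ↔ (1 - u ^ (e.symm z.2).2.val) * (e.symm z.1).1
        = (1 - u ^ (e.symm z.1).2.val) * (e.symm z.2).1
    have h1 : f (e.symm z.1) = z.1 := e.apply_symm_apply z.1
    have h2 : f (e.symm z.2) = z.2 := e.apply_symm_apply z.2
    conv_lhs => rw [← h1, ← h2]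
    exact hcommute _ _
  have hstep2 : Fintype.card {z : (ZMod q × ZMod p) × (ZMod q × ZMod p) //
          (1 - u ^ z.2.2.val) * z.1.1 = (1 - u ^ z.1.2.val) * z.2.1}
      = Fintype.card {w : (ZMod p × ZMod p) × (ZMod q × ZMod q) // C w.1 w.2} := by
    refine Fintype.card_congr (Equiv.subtypeEquiv
      ((Equiv.prodProdProdComm (ZMod q) (ZMod p) (ZMod q) (ZMod p)).trans
        (Equiv.prodComm _ _)) (fun z => ?_))
    obtain ⟨⟨i, I⟩, ⟨j, J⟩⟩ := z
    exact Iff.rfl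
  have hstep3 : Fintype.card {w : (ZMod p × ZMod p) × (ZMod q × ZMod q) // C w.1 w.2}
      = ∑ v : ZMod p × ZMod p, Fintype.card {ij : ZMod q × ZMod q // C v ij} := by
    rw [Fintype.card_congr (Equiv.subtypeProdEquivSigmaSubtype C), Fintype.card_sigma]
  have hstep4 : ∀ v : ZMod p × ZMod p, Fintype.card {ij : ZMod q × ZMod q // C v ij}
      = if u ^ v.1.val = 1 ∧ u ^ v.2.val = 1 then q ^ 2 else q := by
    intro v
    rw [show Fintype.card {ij : ZMod q × ZMod q // C v ij}
        = Fintype.card {ij : ZMod q × ZMod q //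
            (1 - u ^ v.2.val) * ij.1 = (1 - u ^ v.1.val) * ij.2} from
      Fintype.card_congr (Equiv.subtypeEquiv (Equiv.refl _) (fun ij => Iff.rfl))]
    rw [aux_count_lin (1 - u ^ v.2.val) (1 - u ^ v.1.val), ZMod.card]
    exact if_congr (by rw [sub_eq_zero, sub_eq_zero, eq_comm (a := (1 : ZMod q)),
      eq_comm (a := (1 : ZMod q)), and_comm]) rfl rfl
  set P : ZMod p × ZMod p → Prop := fun v => u ^ v.1.val = 1 ∧ u ^ v.2.val = 1 with hP
  set m := p / r with hmdef
  have hm : (Finset.univ.filter (fun I : ZMod p => u ^ I.val = 1)).card = m := by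
    have hiff : ∀ I : ZMod p, (u ^ I.val = 1) ↔ r ∣ I.val := fun I => by
      rw [hr]; exact orderOf_dvd_iff_pow_eq_one.symm
    rw [Finset.filter_congr (fun I _ => hiff I)]
    exact aux_count_dvd p r hr0 hrp
  have hcP : (Finset.univ.filter P).card = m * m := by
    have hsplitP : Finset.univ.filter P
        = (Finset.univ.filter (fun I : ZMod p => u ^ I.val = 1)) ×ˢ
          (Finset.univ.filter (fun I : ZMod p => u ^ I.val = 1)) := by
      ext v
      simp only [hP, Finset.mem_filter, Finset.mem_univ, true_and, Finset.mem_product]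
    rw [hsplitP, Finset.card_product, hm]
  set cN := (Finset.univ.filter (fun v => ¬ P v)).card with hcN
  have hsplit : m * m + cN = p * p := by
    rw [← hcP, hcN, Finset.card_filter_add_card_filter_not]
    simp [ZMod.card]
  have hite : ∑ v : ZMod p × ZMod p, (if P v then q ^ 2 else q)
      = m * m * q ^ 2 + cN * q := by
    rw [Finset.sum_ite, Finset.sum_const, Finset.sum_const, smul_eq_mul, smul_eq_mul, hcP]
  have hG : Nat.card G = q * p := by rw [Nat.card_eq_fintype_card, hcard]
  have htot : Nat.card (ConjClasses G) * (q * p) = m * m * q ^ 2 + cN * q := by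
    rw [← hG, ← card_comm_eq_card_conjClasses_mul_card, hNcard, hstep2, hstep3]
    rw [Finset.sum_congr rfl (fun v _ => hstep4 v)]
    exact hite
  set t := (q - 1) / r with htdef
  have hpm : p = r * m := by rw [hmdef, Nat.mul_div_cancel' hrp]
  have hqs : q = r * t + 1 := by
    have h1 : r * t = q - 1 := by rw [htdef, Nat.mul_div_cancel' hrq]
    omega
  have hfinal : Nat.card (ConjClasses G) = p + m * t := by
    have hqp0 : 0 < q * p := Nat.mul_pos hq.pos hp
    apply Nat.eq_of_mul_eq_mul_right hqp0
    rw [htot]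
    zify
    have h1' : (m : ℤ) * m + cN = p * p := by exact_mod_cast hsplit
    have hpm' : (p : ℤ) = r * m := by exact_mod_cast hpm
    have hqs' : (q : ℤ) = r * t + 1 := by exact_mod_cast hqs
    linear_combination (q : ℤ) * h1' + ((q : ℤ) * m * m) * hqs' - ((q : ℤ) * m * t) * hpm'
  rw [hfinal]
  congr 1
  have h2 : (q - 1) * p = r ^ 2 * (m * t) := by
    have h3 : q - 1 = r * t := by omega
    rw [h3, hpm]; ring
  rw [h2, Nat.mul_div_cancel_left _ (pow_pos hr0 2)]
end

section
/- Let G be a symmetric n×n integer matrix with even diagonal entries, Ḡ its lower-triangular half, and g an n×n integer matrix with g G gᵀ = G. Set M = Ḡ − g Ḡ gᵀ and let M̄ be the lower-triangular half of M (since M has zero diagonal, M̄ is the strictly lower-triangular part of M). Define ε(α, β) = (−1)^{α Ḡ βᵀ} and η(α) = (−1)^{α M̄ αᵀ} for row vectors α, β ∈ ℤⁿ. Then η(α)·η(β)·ε(α, β) = η(α + β)·ε(α g, β g) for all α, β ∈ ℤⁿ. -/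
/-!
`Ḡ + Ḡᵀ = G`, so `M + Mᵀ = G - g G gᵀ = 0`: `M` is alternating. Writing
`q(α) = α M̄ αᵀ`, polarization gives `q(α + β) = q(α) + q(β) + α (M̄ + M̄ᵀ) βᵀ`, while
`(α g) Ḡ (β g)ᵀ = α Ḡ βᵀ - α M βᵀ`. The two sides of the identity are therefore powers of `-1`
whose exponents differ by `α (M - (M̄ + M̄ᵀ)) βᵀ`, and `M - (M̄ + M̄ᵀ)` has even entries because `M`
is alternating: it vanishes on and below the diagonal and equals `2 M` above it.
-/

open Matrix

namespace Matrix

section Bilinear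

variable {ι R : Type*} [Fintype ι] [CommRing R]

theorem add_vecMul_dotProduct_add (A : Matrix ι ι R) (x y : ι → R) :
    (x + y) ᵥ* A ⬝ᵥ (x + y) = x ᵥ* A ⬝ᵥ x + y ᵥ* A ⬝ᵥ y + x ᵥ* (A + Aᵀ) ⬝ᵥ y := by
  rw [add_vecMul, vecMul_add, add_dotProduct, dotProduct_add, dotProduct_add, add_dotProduct,
    vecMul_transpose, dotProduct_comm (A *ᵥ x), dotProduct_mulVec]
  ring

theorem vecMul_vecMul_dotProduct_vecMul (A g : Matrix ι ι R) (x y : ι → R) :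
    (x ᵥ* g) ᵥ* A ⬝ᵥ y ᵥ* g = x ᵥ* (g * A * gᵀ) ⬝ᵥ y := by
  rw [← vecMul_vecMul, ← vecMul_vecMul, vecMul_transpose, dotProduct_comm (g *ᵥ _),
    dotProduct_mulVec, dotProduct_comm]

theorem sub_conj_add_transpose (A g : Matrix ι ι R) :
    A - g * A * gᵀ + (A - g * A * gᵀ)ᵀ = A + Aᵀ - g * (A + Aᵀ) * gᵀ := by
  simp only [transpose_sub, transpose_mul, transpose_transpose, Matrix.mul_add, Matrix.add_mul,
    Matrix.mul_assoc]
  abel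

theorem dvd_vecMul_dotProduct {A : Matrix ι ι R} {d : R} (hA : ∀ i j, d ∣ A i j) (x y : ι → R) :
    d ∣ x ᵥ* A ⬝ᵥ y :=
  Finset.dvd_sum fun j _ => (Finset.dvd_sum fun i _ => (hA i j).mul_left _).mul_right _

end Bilinear

section LowerHalf

variable {ι : Type*} [LinearOrder ι]

def lowerHalf (A : Matrix ι ι ℤ) : Matrix ι ι ℤ :=
  of fun i j => if j < i then A i j else if i = j then A i i / 2 else 0

theorem lowerHalf_add_transpose {A : Matrix ι ι ℤ} (hA : A.IsSymm) (hdiag : ∀ i, 2 ∣ A i i) :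
    lowerHalf A + (lowerHalf A)ᵀ = A := by
  ext i j
  rcases lt_trichotomy j i with h | rfl | h
  · simp [lowerHalf, h, h.ne, h.not_gt]
  · obtain ⟨k, hk⟩ := hdiag j
    simp [lowerHalf, hk]
    ring
  · simp [lowerHalf, h, h.ne, h.not_gt, hA.apply i j]

theorem two_dvd_sub_lowerHalf_add_transpose {A : Matrix ι ι ℤ} (hA : A + Aᵀ = 0) (i j : ι) :
    2 ∣ (A - (lowerHalf A + (lowerHalf A)ᵀ)) i j := by
  have hskew : A j i = -A i j := by
    have := congr_fun₂ hA i j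
    simp only [add_apply, transpose_apply, zero_apply] at this
    omega
  rcases lt_trichotomy j i with h | rfl | h
  · simp [lowerHalf, h, h.ne, h.not_gt]
  · simp [lowerHalf, show A j j = 0 by omega]
  · simp only [sub_apply, add_apply, transpose_apply, lowerHalf, of_apply, h, h.ne, h.not_gt,
      if_true, if_false, hskew]
    exact ⟨A i j, by ring⟩

end LowerHalf

end Matrix

/-- Let `G` be a symmetric `n×n` integer matrix with even diagonal, `Ḡ` its
lower-triangular half, and `g` an integer matrix with `g G gᵀ = G`.  Set
`M = Ḡ − g Ḡ gᵀ` with lower-triangular half `M̄`.  With `ε(α,β) = (−1)^{α Ḡ βᵀ}` and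
`η(α) = (−1)^{α M̄ αᵀ}` one has `η(α)·η(β)·ε(α,β) = η(α+β)·ε(α g, β g)` for all
`α, β ∈ ℤⁿ`. -/
theorem eta_is_lift
    (n : ℕ) (G : Matrix (Fin n) (Fin n) ℤ)
    (hsymm : G.IsSymm) (heven : ∀ i, 2 ∣ G i i)
    (Gbar : Matrix (Fin n) (Fin n) ℤ)
    (hGbar : ∀ i j, Gbar i j = if j < i then G i j else if i = j then G i i / 2 else 0)
    (g : Matrix (Fin n) (Fin n) ℤ) (hg : g * G * g.transpose = G)
    (M : Matrix (Fin n) (Fin n) ℤ) (hM : M = Gbar - g * Gbar * g.transpose)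
    (Mbar : Matrix (Fin n) (Fin n) ℤ)
    (hMbar : ∀ i j, Mbar i j = if j < i then M i j else if i = j then M i i / 2 else 0)
    (ε : (Fin n → ℤ) → (Fin n → ℤ) → ℤˣ)
    (hε : ∀ α β, ε α β = (-1 : ℤˣ) ^ dotProduct (Matrix.vecMul α Gbar) β)
    (η : (Fin n → ℤ) → ℤˣ)
    (hη : ∀ α, η α = (-1 : ℤˣ) ^ dotProduct (Matrix.vecMul α Mbar) α) :
    ∀ α β : Fin n → ℤ,
      η α * η β * ε α β = η (α + β) * ε (Matrix.vecMul α g) (Matrix.vecMul β g) := by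
  obtain rfl : Gbar = lowerHalf G := Matrix.ext hGbar
  obtain rfl : Mbar = lowerHalf M := Matrix.ext hMbar
  have hM_alt : M + Mᵀ = 0 := by
    rw [hM, sub_conj_add_transpose, lowerHalf_add_transpose hsymm heven, hg, sub_self]
  have hconj : g * lowerHalf G * gᵀ = lowerHalf G - M := by rw [hM, sub_sub_cancel]
  intro α β
  have hparity := dvd_vecMul_dotProduct (two_dvd_sub_lowerHalf_add_transpose hM_alt) α β
  simp only [hη, hε, ← Int.negOnePow_def, ← Int.negOnePow_add, Int.negOnePow_eq_iff,
    even_iff_two_dvd, add_vecMul_dotProduct_add, vecMul_vecMul_dotProduct_vecMul, hconj]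
  convert hparity using 1
  simp only [vecMul_sub, sub_dotProduct, vecMul_add, add_dotProduct]
  ring
end

section
/- Let ε : ℤⁿ × ℤⁿ → ℂ* be any function, let g and h be n×n integer matrices acting on row vectors by right multiplication, and suppose η₁, η₂, η₃ : ℤⁿ → ℂ* satisfy, for all α, β ∈ ℤⁿ: η₁(α)η₁(β)ε(α, β) = η₁(α+β)ε(α g, β g), η₂(α)η₂(β)ε(α, β) = η₂(α+β)ε(α h, β h), and η₃(α)η₃(β)ε(α, β) = η₃(α+β)ε(α h g, β h g). Then the function s : ℤⁿ → ℂ* defined by s(α) = η₂(α)·η₁(α h)·η₃(α)^{-1} is a group homomorphism from (ℤⁿ, +) to (ℂ*, ·), i.e. s(α + β) = s(α)·s(β) for all α, β ∈ ℤⁿ. -/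
/-- Let `ε : ℤⁿ × ℤⁿ → ℂ*` be any function, `g`, `h` integer matrices acting on row
vectors on the right, and suppose `η₁, η₂, η₃ : ℤⁿ → ℂ*` are lifts for `g`, `h`, and the
composite `α ↦ (α h) g` respectively, i.e.
`ηᵢ(α)ηᵢ(β)ε(α,β) = ηᵢ(α+β)ε(α m, β m)` for the corresponding matrix `m`.
Then `s(α) = η₂(α)·η₁(α h)·η₃(α)⁻¹` is a group homomorphism `(ℤⁿ, +) → (ℂ*, ·)`. -/
theorem lift_cocycle_is_hom
    (n : ℕ) (ε : (Fin n → ℤ) → (Fin n → ℤ) → ℂˣ)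
    (g h : Matrix (Fin n) (Fin n) ℤ)
    (η₁ η₂ η₃ : (Fin n → ℤ) → ℂˣ)
    (h1 : ∀ α β, η₁ α * η₁ β * ε α β =
      η₁ (α + β) * ε (Matrix.vecMul α g) (Matrix.vecMul β g))
    (h2 : ∀ α β, η₂ α * η₂ β * ε α β =
      η₂ (α + β) * ε (Matrix.vecMul α h) (Matrix.vecMul β h))
    (h3 : ∀ α β, η₃ α * η₃ β * ε α β =
      η₃ (α + β) * ε (Matrix.vecMul (Matrix.vecMul α h) g)
        (Matrix.vecMul (Matrix.vecMul β h) g)) :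
    ∀ α β : Fin n → ℤ,
      η₂ (α + β) * η₁ (Matrix.vecMul (α + β) h) * (η₃ (α + β))⁻¹ =
        (η₂ α * η₁ (Matrix.vecMul α h) * (η₃ α)⁻¹) *
          (η₂ β * η₁ (Matrix.vecMul β h) * (η₃ β)⁻¹) := by
  intro α β
  have e1 := h1 (Matrix.vecMul α h) (Matrix.vecMul β h)
  have e2 := h2 α β
  have e3 := h3 α β
  rw [Matrix.add_vecMul]
  apply Units.ext
  have E1 := congrArg Units.val e1
  have E2 := congrArg Units.val e2
  have E3 := congrArg Units.val e3
  simp only [Units.val_mul] at E1 E2 E3 ⊢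
  rw [Units.val_inv_eq_inv_val, Units.val_inv_eq_inv_val, Units.val_inv_eq_inv_val]
  set a := (η₂ α : ℂ); set b := (η₂ β : ℂ); set A := (η₂ (α + β) : ℂ)
  set x := (η₁ (Matrix.vecMul α h) : ℂ); set y := (η₁ (Matrix.vecMul β h) : ℂ)
  set I := (η₁ (Matrix.vecMul α h + Matrix.vecMul β h) : ℂ)
  set c := (η₃ α : ℂ); set d := (η₃ β : ℂ); set C := (η₃ (α + β) : ℂ)
  set e := (ε α β : ℂ)
  set F := (ε (Matrix.vecMul α h) (Matrix.vecMul β h) : ℂ)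
  set G := (ε (Matrix.vecMul (Matrix.vecMul α h) g) (Matrix.vecMul (Matrix.vecMul β h) g) : ℂ)
  have hM : e * F * G ≠ 0 :=
    mul_ne_zero (mul_ne_zero (Units.ne_zero _) (Units.ne_zero _)) (Units.ne_zero _)
  have key : (A * I * c * d) * (e * F * G) = (C * a * x * b * y) * (e * F * G) := by
    linear_combination (a*b*x*y*e*F) * E3 - (a*b*c*d*e*e) * E1 - (I*c*d*e*G) * E2
  have key2 := mul_right_cancel₀ hM key
  have hc : c ≠ 0 := Units.ne_zero _
  have hd : d ≠ 0 := Units.ne_zero _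
  have hC : C ≠ 0 := Units.ne_zero _
  field_simp
  linear_combination key2
end

section
/- Let A be a finite abelian group and β : A × A → ℂ* a bimultiplicative, alternating, nondegenerate form. Then there exist k ≥ 0, elements a₁, …, a_k, b₁, …, b_k ∈ A, and positive integers n₁, …, n_k with n_i dividing n_{i+1} for all i, such that: the order of a_i and the order of b_i both equal n_i; A is the internal direct sum of the cyclic subgroups ⟨a₁⟩, …, ⟨a_k⟩, ⟨b₁⟩, …, ⟨b_k⟩; β(a_i, a_j) = 1 and β(b_i, b_j) = 1 for all i, j; β(a_i, b_j) = 1 for i ≠ j; and β(a_i, b_i) is a primitive n_i-th root of unity for each i. -/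
universe u

private lemma zmodValCast {m m' : ℕ} (h : m' = m) (x : ZMod m') :
    (cast (congrArg ZMod h) x).val = x.val := by subst h; rfl

private lemma darboux_skew {A : Type u} [CommGroup A] (β : A → A → ℂˣ)
    (hl : ∀ x y z : A, β (x * y) z = β x z * β y z)
    (hr : ∀ x y z : A, β x (y * z) = β x y * β x z)
    (halt : ∀ x : A, β x x = 1) (x y : A) : β y x = (β x y)⁻¹ := by
  have h := halt (x * y)
  rw [hl, hr, hr, halt, halt, one_mul, mul_one] at h
  exact eq_inv_of_mul_eq_one_right h

private lemma darboux_inj {A : Type u} [CommGroup A] (β : A → A → ℂˣ)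
    (hl : ∀ x y z : A, β (x * y) z = β x z * β y z)
    (hr : ∀ x y z : A, β x (y * z) = β x y * β x z)
    (halt : ∀ x : A, β x x = 1)
    {k : ℕ} (a b : Fin k → A) (nn : Fin k → ℕ)
    (hpos : ∀ i, 0 < nn i)
    (haa : ∀ i j, β (a i) (a j) = 1)
    (hbb : ∀ i j, β (b i) (b j) = 1)
    (hab : ∀ i j, i ≠ j → β (a i) (b j) = 1)
    (hprim : ∀ i, IsPrimitiveRoot (β (a i) (b i)) (nn i)) :
    Function.Injective fun cd : (∀ i, ZMod (nn i)) × (∀ i, ZMod (nn i)) =>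
      (∏ i, a i ^ (cd.1 i).val) * ∏ i, b i ^ (cd.2 i).val := by
  have hskew := darboux_skew β hl hr halt
  have key : ∀ (c d : ∀ i, ZMod (nn i)) (z : A),
      β ((∏ i, a i ^ (c i).val) * ∏ i, b i ^ (d i).val) z
        = (∏ i, β (a i) z ^ (c i).val) * ∏ i, β (b i) z ^ (d i).val := by
    intro c d z
    let φ : A →* ℂˣ := MonoidHom.mk' (fun x => β x z) fun u v => hl u v z
    show φ _ = _
    rw [map_mul, map_prod, map_prod]
    simp only [map_pow]
    rfl
  have hval : ∀ (j : Fin k) (s t : ZMod (nn j)) (w : ℂˣ), orderOf w = nn j →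
      w ^ s.val = w ^ t.val → s = t := by
    intro j s t w hw hst
    haveI : NeZero (nn j) := ⟨(hpos j).ne'⟩
    have h2 := pow_eq_pow_iff_modEq.mp hst
    rw [hw] at h2
    have h3 : s.val = t.val := by
      rwa [Nat.ModEq, Nat.mod_eq_of_lt (ZMod.val_lt s), Nat.mod_eq_of_lt (ZMod.val_lt t)] at h2
    exact ZMod.val_injective _ h3
  have pa : ∀ (c : ∀ i, ZMod (nn i)) (j : Fin k),
      (∏ i, β (a i) (b j) ^ (c i).val) = β (a j) (b j) ^ (c j).val := fun c j =>
    Finset.prod_eq_single j (fun i _ hij => by rw [hab i j hij, one_pow])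
      (fun h => absurd (Finset.mem_univ j) h)
  have pb : ∀ (d : ∀ i, ZMod (nn i)) (j : Fin k),
      (∏ i, β (b i) (b j) ^ (d i).val) = 1 := fun d j =>
    Finset.prod_eq_one fun i _ => by rw [hbb i j, one_pow]
  have qa : ∀ (c : ∀ i, ZMod (nn i)) (j : Fin k),
      (∏ i, β (a i) (a j) ^ (c i).val) = 1 := fun c j =>
    Finset.prod_eq_one fun i _ => by rw [haa i j, one_pow]
  have qb : ∀ (d : ∀ i, ZMod (nn i)) (j : Fin k),
      (∏ i, β (b i) (a j) ^ (d i).val) = β (b j) (a j) ^ (d j).val := fun d j =>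
    Finset.prod_eq_single j
      (fun i _ hij => by rw [hskew (a j) (b i), hab j i (Ne.symm hij), inv_one, one_pow])
      (fun h => absurd (Finset.mem_univ j) h)
  rintro ⟨c, d⟩ ⟨c', d'⟩ h
  simp only at h
  have hc : ∀ j, c j = c' j := by
    intro j
    have h1 := congrArg (fun w => β w (b j)) h
    simp only [key] at h1
    rw [pa c j, pa c' j, pb d j, pb d' j, mul_one, mul_one] at h1
    exact hval j _ _ _ (hprim j).eq_orderOf.symm h1
  have hd : ∀ j, d j = d' j := by
    intro j
    have h1 := congrArg (fun w => β w (a j)) h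
    simp only [key] at h1
    rw [qa c j, qa c' j, qb d j, qb d' j, one_mul, one_mul] at h1
    refine hval j _ _ _ ?_ h1
    rw [hskew (a j) (b j), orderOf_inv]
    exact (hprim j).eq_orderOf.symm
  exact Prod.ext (funext hc) (funext hd)

private theorem darboux_aux : ∀ (N : ℕ) (A : Type u) [CommGroup A] [Fintype A]
    (β : A → A → ℂˣ),
    (∀ x y z : A, β (x * y) z = β x z * β y z) →
    (∀ x y z : A, β x (y * z) = β x y * β x z) →
    (∀ x : A, β x x = 1) →
    (∀ x : A, (∀ y : A, β x y = 1) → x = 1) →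
    Fintype.card A ≤ N →
    ∃ (k : ℕ) (a b : Fin k → A) (nn : Fin k → ℕ),
      (∀ i, 0 < nn i) ∧
      (∀ i j : Fin k, i ≤ j → nn i ∣ nn j) ∧
      (∀ i, orderOf (a i) = nn i) ∧
      (∀ i, orderOf (b i) = nn i) ∧
      (Function.Surjective fun cd : (∀ i, ZMod (nn i)) × (∀ i, ZMod (nn i)) =>
        (∏ i, a i ^ (cd.1 i).val) * ∏ i, b i ^ (cd.2 i).val) ∧
      (∀ i j, β (a i) (a j) = 1) ∧
      (∀ i j, β (b i) (b j) = 1) ∧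
      (∀ i j, i ≠ j → β (a i) (b j) = 1) ∧
      ∀ i, IsPrimitiveRoot (β (a i) (b i)) (nn i) := by
  intro N
  induction N using Nat.strong_induction_on with
  | _ N ih =>
  intro A _ _ β hl hr halt hnd hcard
  classical
  have hskew := darboux_skew β hl hr halt
  have hone : ∀ z : A, β 1 z = 1 := by
    intro z
    have h := hl 1 1 z
    rw [one_mul] at h
    exact (left_eq_mul.mp h)
  have hone' : ∀ z : A, β z 1 = 1 := by
    intro z
    have h := hr z 1 1
    rw [one_mul] at h
    exact (left_eq_mul.mp h)
  by_cases htriv : ∀ x : A, x = 1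
  · refine ⟨0, finZeroElim, finZeroElim, finZeroElim, fun i => i.elim0, fun i => i.elim0,
      fun i => i.elim0, fun i => i.elim0, ?_, fun i => i.elim0, fun i => i.elim0,
      fun i => i.elim0, fun i => i.elim0⟩
    intro x
    exact ⟨(finZeroElim, finZeroElim), by simp [(htriv x).symm]⟩
  · push_neg at htriv
    obtain ⟨x₀, hx₀⟩ := htriv
    have hEE : Monoid.ExponentExists A := Monoid.ExponentExists.of_finite
    set n := Monoid.exponent A with hn
    have hnpos : 0 < n := hEE.exponent_pos
    haveI : NeZero n := ⟨hnpos.ne'⟩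
    obtain ⟨a, ha⟩ := Monoid.exists_orderOf_eq_exponent hEE
    let ψ : A → (A →* ℂˣ) := fun x => MonoidHom.mk' (fun z => β x z) fun u v => hr x u v
    let φ : A → (A →* ℂˣ) := fun z => MonoidHom.mk' (fun x => β x z) fun u v => hl u v z
    haveI : Finite (ψ a).range := Set.Finite.to_subtype (Set.finite_range _)
    haveI : IsCyclic (ψ a).range := subgroup_units_cyclic _
    obtain ⟨g, hg⟩ := IsCyclic.exists_generator (α := (ψ a).range)
    obtain ⟨b, hb⟩ := g.2
    have hζg : (g : ℂˣ) = β a b := hb.symm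
    have hgd : orderOf (g : ℂˣ) ∣ n := by
      apply orderOf_dvd_of_pow_eq_one
      rw [hζg]
      have : β a b ^ n = β a (b ^ n) := (map_pow (ψ a) b n).symm
      rw [this, Monoid.pow_exponent_eq_one b]
      exact hone' a
    have hndvd : n ∣ orderOf (g : ℂˣ) := by
      rw [hn, ← ha]
      apply orderOf_dvd_of_pow_eq_one
      apply hnd
      intro y
      obtain ⟨m, hm⟩ := hg ⟨β a y, ⟨y, rfl⟩⟩
      have hm' : (g : ℂˣ) ^ m = β a y := by
        have := congrArg (Subtype.val) hm
        push_cast at this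
        exact this
      calc β (a ^ orderOf (g : ℂˣ)) y = (β a y) ^ orderOf (g : ℂˣ) := map_pow (φ y) a _
        _ = ((g : ℂˣ) ^ m) ^ (orderOf (g : ℂˣ) : ℤ) := by rw [hm', zpow_natCast]
        _ = ((g : ℂˣ) ^ (orderOf (g : ℂˣ) : ℤ)) ^ m := by
            rw [← zpow_mul, mul_comm, zpow_mul]
        _ = 1 := by rw [zpow_natCast, pow_orderOf_eq_one, one_zpow]
    have hord : orderOf (β a b) = n := by rw [← hζg]; exact Nat.dvd_antisymm hgd hndvd
    have hprimζ : IsPrimitiveRoot (β a b) n := hord ▸ IsPrimitiveRoot.orderOf (β a b)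
    have hn1 : 1 < n := by
      rcases Nat.lt_or_ge 1 n with h | h
      · exact h
      · exfalso
        have hn' : n = 1 := le_antisymm h hnpos
        refine hx₀ ?_
        have := Monoid.pow_exponent_eq_one x₀
        rwa [← hn, hn', pow_one] at this
    have hζne : β a b ≠ 1 := by
      intro h
      rw [h, orderOf_one] at hord
      omega
    have hordb : orderOf b = n := by
      refine Nat.dvd_antisymm (by rw [hn]; exact Monoid.order_dvd_exponent b) ?_
      rw [← hord]
      apply orderOf_dvd_of_pow_eq_one
      have : β a b ^ orderOf b = β a (b ^ orderOf b) := (map_pow (ψ a) b _).symm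
      rw [this, pow_orderOf_eq_one]
      exact hone' a
    let K : Subgroup A := (φ a).ker ⊓ (φ b).ker
    have hmemK : ∀ x : A, x ∈ K ↔ β x a = 1 ∧ β x b = 1 := by
      intro x
      simp only [K, Subgroup.mem_inf, MonoidHom.mem_ker]
      rfl
    have haK : a ∉ K := fun h => hζne ((hmemK a).mp h).2
    have hcardK : Fintype.card K < Fintype.card A := by
      refine Fintype.card_lt_of_injective_of_notMem ((↑) : K → A) Subtype.coe_injective
        (b := a) ?_
      rintro ⟨⟨z, hz⟩, hEq⟩
      exact haK (hEq ▸ hz)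
    have decomp : ∀ x : A, ∃ (cn dn : ℕ) (y : A), y ∈ K ∧ x = a ^ cn * b ^ dn * y := by
      intro x
      have hxb : β x b ^ n = 1 := by
        have h1 : β x b ^ n = β (x ^ n) b := (map_pow (φ b) x n).symm
        rw [h1, Monoid.pow_exponent_eq_one x]
        exact hone b
      have hxa : β x a ^ n = 1 := by
        have h1 : β x a ^ n = β (x ^ n) a := (map_pow (φ a) x n).symm
        rw [h1, Monoid.pow_exponent_eq_one x]
        exact hone a
      obtain ⟨cn, hcn_lt, hcn⟩ := hprimζ.eq_pow_of_mem_rootsOfUnity ((mem_rootsOfUnity n _).mpr hxb)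
      obtain ⟨e, he_lt, he⟩ := hprimζ.eq_pow_of_mem_rootsOfUnity ((mem_rootsOfUnity n _).mpr hxa)
      refine ⟨cn, n - e, (a ^ cn * b ^ (n - e))⁻¹ * x, ?_, by group⟩
      rw [hmemK]
      constructor
      · show (φ a) ((a ^ cn * b ^ (n - e))⁻¹ * x) = 1
        rw [map_mul, map_inv, map_mul, map_pow, map_pow]
        show ((β a a) ^ cn * (β b a) ^ (n - e))⁻¹ * β x a = 1
        rw [halt a, one_pow, one_mul, hskew a b, ← he, inv_pow, inv_inv, ← pow_add,
          Nat.sub_add_cancel he_lt.le, hprimζ.pow_eq_one]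
      · show (φ b) ((a ^ cn * b ^ (n - e))⁻¹ * x) = 1
        rw [map_mul, map_inv, map_mul, map_pow, map_pow]
        show ((β a b) ^ cn * (β b b) ^ (n - e))⁻¹ * β x b = 1
        rw [halt b, one_pow, mul_one, ← hcn]
        exact inv_mul_cancel _
    -- restrict the form to K
    let β' : K → K → ℂˣ := fun x y => β ↑x ↑y
    have hl' : ∀ x y z : K, β' (x * y) z = β' x z * β' y z := fun x y z => hl ↑x ↑y ↑z
    have hr' : ∀ x y z : K, β' x (y * z) = β' x y * β' x z := fun x y z => hr ↑x ↑y ↑z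
    have halt' : ∀ x : K, β' x x = 1 := fun x => halt ↑x
    have hnd' : ∀ x : K, (∀ y : K, β' x y = 1) → x = 1 := by
      intro x hx
      refine Subtype.ext (hnd ↑x ?_)
      intro y
      obtain ⟨cn, dn, y', hy'K, rfl⟩ := decomp y
      have h1 : β ↑x a = 1 := ((hmemK ↑x).mp x.2).1
      have h2 : β ↑x b = 1 := ((hmemK ↑x).mp x.2).2
      have h3 : β ↑x y' = 1 := hx ⟨y', hy'K⟩
      show (ψ ↑x) (a ^ cn * b ^ dn * y') = 1
      rw [map_mul, map_mul, map_pow, map_pow]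
      show β ↑x a ^ cn * β ↑x b ^ dn * β ↑x y' = 1
      rw [h1, h2, h3, one_pow, one_pow, one_mul, mul_one]
    obtain ⟨k, a', b', nn', hpos', hdvd', horda', hordb', hsurj', haa', hbb', hab', hprim'⟩ :=
      ih (Fintype.card K) (lt_of_lt_of_le hcardK hcard) K β' hl' hr' halt' hnd' le_rfl
    have hdvdn : ∀ i, nn' i ∣ n := by
      intro i
      rw [← horda' i, ← Subgroup.orderOf_coe (a' i), hn]
      exact Monoid.order_dvd_exponent _
    have hKa : ∀ i, β ↑(a' i) a = 1 := fun i => ((hmemK ↑(a' i)).mp (a' i).2).1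
    have hKab : ∀ i, β ↑(a' i) b = 1 := fun i => ((hmemK ↑(a' i)).mp (a' i).2).2
    have hKb : ∀ i, β ↑(b' i) a = 1 := fun i => ((hmemK ↑(b' i)).mp (b' i).2).1
    have hKbb : ∀ i, β ↑(b' i) b = 1 := fun i => ((hmemK ↑(b' i)).mp (b' i).2).2
    refine ⟨k + 1, Fin.snoc (fun i => ↑(a' i)) a, Fin.snoc (fun i => ↑(b' i)) b,
      Fin.snoc nn' n, ?_, ?_, ?_, ?_, ?_, ?_, ?_, ?_, ?_⟩
    · intro i
      rcases Fin.eq_castSucc_or_eq_last i with ⟨i', rfl⟩ | rfl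
      · simpa using hpos' i'
      · simpa using hnpos
    · intro i j hij
      rcases Fin.eq_castSucc_or_eq_last j with ⟨j', rfl⟩ | rfl
      · rcases Fin.eq_castSucc_or_eq_last i with ⟨i', rfl⟩ | rfl
        · simp only [Fin.snoc_castSucc]
          exact hdvd' i' j' (by simpa using hij)
        · exfalso
          rw [Fin.le_def] at hij
          simp only [Fin.val_last, Fin.coe_castSucc] at hij
          exact absurd hij (Nat.not_le.mpr j'.isLt)
      · rcases Fin.eq_castSucc_or_eq_last i with ⟨i', rfl⟩ | rfl
        · simp only [Fin.snoc_castSucc, Fin.snoc_last]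
          exact hdvdn i'
        · simp
    · intro i
      rcases Fin.eq_castSucc_or_eq_last i with ⟨i', rfl⟩ | rfl
      · simp only [Fin.snoc_castSucc]
        rw [Subgroup.orderOf_coe]
        exact horda' i'
      · simp only [Fin.snoc_last]
        rw [ha, hn]
    · intro i
      rcases Fin.eq_castSucc_or_eq_last i with ⟨i', rfl⟩ | rfl
      · simp only [Fin.snoc_castSucc]
        rw [Subgroup.orderOf_coe]
        exact hordb' i'
      · simp only [Fin.snoc_last]
        exact hordb
    · -- surjectivity
      intro x
      obtain ⟨cn, dn, y, hyK, rfl⟩ := decomp x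
      obtain ⟨⟨c', d'⟩, hy'⟩ := hsurj' ⟨y, hyK⟩
      have hy'' : (∏ i, ((a' i : A)) ^ (c' i).val) * ∏ i, ((b' i : A)) ^ (d' i).val = y := by
        have h2 := congrArg K.subtype hy'
        rw [map_mul, map_prod, map_prod] at h2
        simp only [map_pow] at h2
        exact h2
      have hnnc : ∀ i : Fin k, Fin.snoc (α := fun _ => ℕ) nn' n (Fin.castSucc i) = nn' i := fun i => by simp
      have hnnl : Fin.snoc (α := fun _ => ℕ) nn' n (Fin.last k) = n := by simp
      refine ⟨(Fin.snoc (fun i => cast (congrArg ZMod (hnnc i).symm) (c' i))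
          (cast (congrArg ZMod hnnl.symm) ((cn : ZMod n))),
        Fin.snoc (fun i => cast (congrArg ZMod (hnnc i).symm) (d' i))
          (cast (congrArg ZMod hnnl.symm) ((dn : ZMod n)))), ?_⟩
      dsimp only
      rw [Fin.prod_univ_castSucc, Fin.prod_univ_castSucc]
      simp only [Fin.snoc_castSucc, Fin.snoc_last, zmodValCast]
      have hpowa : a ^ ((cn : ZMod n)).val = a ^ cn := by
        rw [ZMod.val_natCast]
        conv_rhs => rw [← pow_mod_orderOf]
        rw [ha, ← hn]
      have hpowb : b ^ ((dn : ZMod n)).val = b ^ dn := by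
        rw [ZMod.val_natCast]
        conv_rhs => rw [← pow_mod_orderOf]
        rw [hordb]
      rw [hpowa, hpowb, mul_mul_mul_comm, hy'', mul_comm]
    · intro i j
      rcases Fin.eq_castSucc_or_eq_last i with ⟨i', rfl⟩ | rfl <;>
        rcases Fin.eq_castSucc_or_eq_last j with ⟨j', rfl⟩ | rfl <;>
        simp only [Fin.snoc_castSucc, Fin.snoc_last]
      · exact haa' i' j'
      · exact hKa i'
      · rw [hskew (↑(a' j')) a, hKa j', inv_one]
      · exact halt a
    · intro i j
      rcases Fin.eq_castSucc_or_eq_last i with ⟨i', rfl⟩ | rfl <;>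
        rcases Fin.eq_castSucc_or_eq_last j with ⟨j', rfl⟩ | rfl <;>
        simp only [Fin.snoc_castSucc, Fin.snoc_last]
      · exact hbb' i' j'
      · exact hKbb i'
      · rw [hskew (↑(b' j')) b, hKbb j', inv_one]
      · exact halt b
    · intro i j hij
      rcases Fin.eq_castSucc_or_eq_last i with ⟨i', rfl⟩ | rfl <;>
        rcases Fin.eq_castSucc_or_eq_last j with ⟨j', rfl⟩ | rfl <;>
        simp only [Fin.snoc_castSucc, Fin.snoc_last]
      · exact hab' i' j' (fun h => hij (by rw [h]))
      · exact hKab i'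
      · rw [hskew (↑(b' j')) a, hKb j', inv_one]
      · exact absurd rfl hij
    · intro i
      rcases Fin.eq_castSucc_or_eq_last i with ⟨i', rfl⟩ | rfl
      · simp only [Fin.snoc_castSucc]
        exact hprim' i'
      · simp only [Fin.snoc_last]
        exact hprimζ

/-- Darboux basis for a finite abelian group `A` with a bimultiplicative, alternating,
nondegenerate form `β : A × A → ℂ*`: there exist `k ≥ 0`, elements `a₁, …, a_k`,
`b₁, …, b_k` and positive integers `n₁ ∣ n₂ ∣ … ∣ n_k` such that `a_i` and `b_i` both
have order `n_i`, the group `A` is the internal direct sum of the cyclic subgroups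
`⟨a₁⟩, …, ⟨a_k⟩, ⟨b₁⟩, …, ⟨b_k⟩` (expressed by the bijectivity of the product map),
`β(a_i, a_j) = β(b_i, b_j) = 1`, `β(a_i, b_j) = 1` for `i ≠ j`, and `β(a_i, b_i)` is a
primitive `n_i`-th root of unity. -/
theorem darboux_basis_of_alternating_form
    (A : Type*) [CommGroup A] [Fintype A]
    (β : A → A → ℂˣ)
    (hl : ∀ x y z : A, β (x * y) z = β x z * β y z)
    (hr : ∀ x y z : A, β x (y * z) = β x y * β x z)
    (halt : ∀ x : A, β x x = 1)
    (hnd : ∀ x : A, (∀ y : A, β x y = 1) → x = 1) :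
    ∃ (k : ℕ) (a b : Fin k → A) (nn : Fin k → ℕ),
      (∀ i, 0 < nn i) ∧
      (∀ i j : Fin k, i ≤ j → nn i ∣ nn j) ∧
      (∀ i, orderOf (a i) = nn i) ∧
      (∀ i, orderOf (b i) = nn i) ∧
      (Function.Bijective fun cd : (∀ i, ZMod (nn i)) × (∀ i, ZMod (nn i)) =>
        (∏ i, a i ^ (cd.1 i).val) * ∏ i, b i ^ (cd.2 i).val) ∧
      (∀ i j, β (a i) (a j) = 1) ∧
      (∀ i j, β (b i) (b j) = 1) ∧
      (∀ i j, i ≠ j → β (a i) (b j) = 1) ∧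
      ∀ i, IsPrimitiveRoot (β (a i) (b i)) (nn i) := by
  obtain ⟨k, a, b, nn, hpos, hdvd, horda, hordb, hsurj, haa, hbb, hab, hprim⟩ :=
    darboux_aux (Fintype.card A) A β hl hr halt hnd le_rfl
  exact ⟨k, a, b, nn, hpos, hdvd, horda, hordb,
    ⟨darboux_inj β hl hr halt a b nn hpos haa hbb hab hprim, hsurj⟩,
    haa, hbb, hab, hprim⟩
end

section
/- Let A be a finite abelian group and β : A × A → ℂ* a bimultiplicative nondegenerate form. Then for every a ∈ A of order n there exists b ∈ A such that β(a, b) is a primitive n-th root of unity. -/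
/-!
Currying `β` gives an injective homomorphism `ψ : A →* (A →* ℂˣ)`, so `a` and `ψ a` have the
same order. The order of a character `ψ a` is the exponent of its image, a finite abelian group,
and a finite abelian group has an element whose order is its exponent; that element is a value
`β a b`.
-/

namespace MonoidHom

section Exponent

variable {B G : Type*} [Group B] [CommGroup G]

theorem pow_eq_one_iff_forall_range (f : B →* G) (n : ℕ) :
    f ^ n = 1 ↔ ∀ g : f.range, g ^ n = 1 := by
  simp [MonoidHom.ext_iff, Subtype.ext_iff]

theorem orderOf_eq_exponent_range (f : B →* G) : orderOf f = Monoid.exponent f.range :=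
  Nat.dvd_antisymm
    (orderOf_dvd_of_pow_eq_one <|
      (f.pow_eq_one_iff_forall_range _).2 fun _ => Monoid.pow_exponent_eq_one _)
    (Monoid.exponent_dvd_of_forall_pow_eq_one <|
      (f.pow_eq_one_iff_forall_range _).1 (pow_orderOf_eq_one f))

theorem exists_orderOf_apply_eq_orderOf [Finite B] (f : B →* G) :
    ∃ b, orderOf (f b) = orderOf f := by
  have : Finite f.range := Finite.of_surjective _ f.rangeRestrict_surjective
  obtain ⟨⟨_, b, rfl⟩, hb⟩ := Monoid.exists_orderOf_eq_exponent
    (Monoid.ExponentExists.of_finite (G := f.range))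
  refine ⟨b, ?_⟩
  rw [← Subgroup.orderOf_mk (H := f.range) _ ⟨b, rfl⟩, hb, orderOf_eq_exponent_range]

end Exponent

def ofBimultiplicative {M N G : Type*} [MulOneClass M] [MulOneClass N] [CommGroup G]
    (β : M → N → G) (hl : ∀ x y z, β (x * y) z = β x z * β y z)
    (hr : ∀ x y z, β x (y * z) = β x y * β x z) : M →* N →* G :=
  mk' (fun x => mk' (β x) (hr x)) fun x y => ext (hl x y)

end MonoidHom

/-- Let `A` be a finite abelian group and `β : A × A → ℂ*` a bimultiplicative
nondegenerate form.  Then for every `a ∈ A` of order `n` there exists `b ∈ A` such that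
`β(a, b)` is a primitive `n`-th root of unity. -/
theorem exists_primitive_pairing_value
    (A : Type*) [CommGroup A] [Fintype A]
    (β : A → A → ℂˣ)
    (hl : ∀ x y z : A, β (x * y) z = β x z * β y z)
    (hr : ∀ x y z : A, β x (y * z) = β x y * β x z)
    (hnd : ∀ x : A, (∀ y : A, β x y = 1) → x = 1) :
    ∀ (a : A) (n : ℕ), orderOf a = n → ∃ b : A, IsPrimitiveRoot (β a b) n := by
  rintro a n rfl
  set ψ := MonoidHom.ofBimultiplicative β hl hr
  have hψ : Function.Injective ψ := (injective_iff_map_eq_one ψ).2 fun x hx =>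
    hnd x fun y => DFunLike.congr_fun hx y
  obtain ⟨b, hb⟩ := (ψ a).exists_orderOf_apply_eq_orderOf
  refine ⟨b, ?_⟩
  rw [← orderOf_injective ψ hψ a, ← hb]
  exact IsPrimitiveRoot.orderOf _
end

section
/- Let A be a finite abelian group, Â its group of ℂ*-valued characters, V the complex vector space with basis {e_ψ : ψ ∈ Â}, and for (x, χ) ∈ A × Â let ρ(x, χ) be the linear operator on V with ρ(x, χ) e_ψ = ψ(x) e_{χψ}. Then the collection of operators ρ(x, χ) acts irreducibly on V: the only linear subspaces W ⊆ V with ρ(x, χ)(W) ⊆ W for all (x, χ) ∈ A × Â are W = 0 and W = V. -/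
/-- Any finite abelian group has finitely many `ℂˣ`-valued characters. -/
lemma finite_char_group (A : Type*) [CommGroup A] [Finite A] : Finite (A →* ℂˣ) := by
  have := Fintype.ofFinite A
  exact Finite.of_injective
    (fun f : A →* ℂˣ => (fun a => (⟨f a, by
        simp [mem_rootsOfUnity, ← map_pow, pow_card_eq_one]⟩ :
        rootsOfUnity (Fintype.card A) ℂ)))
    (fun f g h => by ext a; exact congrArg (Units.val ∘ Subtype.val) (congrFun h a))

/-- A nontrivial character sums to zero. -/
lemma char_sum_eq_zero (A : Type*) [CommGroup A] [Fintype A] (χ : A →* ℂˣ) (hχ : χ ≠ 1) :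
    ∑ x : A, (χ x : ℂ) = 0 := by
  obtain ⟨a, ha⟩ : ∃ a, χ a ≠ 1 := by
    by_contra h'; push_neg at h'; exact hχ (MonoidHom.ext fun a => by simp [h' a])
  have key : (χ a : ℂ) * ∑ x : A, (χ x : ℂ) = ∑ x : A, (χ x : ℂ) := by
    rw [Finset.mul_sum]
    refine Fintype.sum_bijective (a * ·) (Group.mulLeft_bijective a) _ _ ?_
    intro x
    push_cast [map_mul]
    ring
  have ha' : (χ a : ℂ) ≠ 1 := fun h => ha (Units.ext (by simpa using h))
  have := sub_eq_zero.mpr key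
  rw [← sub_one_mul] at this
  rcases mul_eq_zero.mp this with h | h
  · exact absurd (by linear_combination h) ha'
  · exact h

/-- Orthogonality of characters. -/
lemma char_orth (A : Type*) [CommGroup A] [Fintype A] [DecidableEq (A →* ℂˣ)]
    (ψ ψ₀ : A →* ℂˣ) :
    ∑ x : A, ((ψ₀ x : ℂ))⁻¹ * (ψ x : ℂ) =
      if ψ = ψ₀ then (Fintype.card A : ℂ) else 0 := by
  split_ifs with h
  · subst h
    have : ∀ x : A, ((ψ x : ℂ))⁻¹ * (ψ x : ℂ) = 1 := fun x =>
      inv_mul_cancel₀ (Units.ne_zero _)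
    simp [this]
  · have hne : ψ * ψ₀⁻¹ ≠ 1 := fun hc => h (MonoidHom.ext fun a => by
      have := DFunLike.congr_fun hc a
      simpa [mul_inv_eq_one] using this)
    have := char_sum_eq_zero A (ψ * ψ₀⁻¹) hne
    rw [← this]
    refine Finset.sum_congr rfl fun x _ => ?_
    have : ((ψ * ψ₀⁻¹) x : ℂ) = (ψ x : ℂ) * ((ψ₀ x : ℂ))⁻¹ := by
      push_cast [MonoidHom.mul_apply, MonoidHom.inv_apply]
      rfl
    rw [this]; ring

/-- Let `A` be a finite abelian group, `Â = A →* ℂˣ` its character group, and `V` the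
complex vector space of functions `Â → ℂ` with standard basis `{e_ψ = Pi.single ψ 1}`.
If `ρ (x, χ)` are linear operators on `V` acting on the basis by
`ρ (x, χ) e_ψ = ψ(x) e_{χψ}`, then they act irreducibly: the only invariant subspaces
are `0` and `V`. -/
theorem defect_representation_irreducible
    (A : Type*) [CommGroup A] [Finite A] [DecidableEq (A →* ℂˣ)]
    (ρ : A → (A →* ℂˣ) → Module.End ℂ ((A →* ℂˣ) → ℂ))
    (hρ : ∀ (x : A) (χ ψ : A →* ℂˣ),
      ρ x χ (Pi.single ψ (1 : ℂ)) =
        (ψ x : ℂ) • (Pi.single (χ * ψ) (1 : ℂ) : (A →* ℂˣ) → ℂ)) :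
    ∀ W : Submodule ℂ ((A →* ℂˣ) → ℂ),
      (∀ (x : A) (χ : A →* ℂˣ), ∀ w ∈ W, ρ x χ w ∈ W) → W = ⊥ ∨ W = ⊤ := by
  intro W hW
  rcases eq_or_ne W ⊥ with h | h
  · exact Or.inl h
  right
  have := Fintype.ofFinite A
  haveI : Finite (A →* ℂˣ) := finite_char_group A
  haveI := Fintype.ofFinite (A →* ℂˣ)
  obtain ⟨w, hwW, hw0⟩ := Submodule.ne_bot_iff W |>.mp h
  obtain ⟨ψ₀, hψ₀⟩ := Function.ne_iff.mp hw0
  have hψ₀' : w ψ₀ ≠ 0 := hψ₀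
  -- expand w in the basis
  have hw_expand : w = ∑ ψ : (A →* ℂˣ), w ψ • (Pi.single ψ (1 : ℂ) : (A →* ℂˣ) → ℂ) := by
    funext φ
    simp [Finset.sum_apply, Pi.single_apply]
  -- action of ρ x 1 on w
  have hρ1 : ∀ x : A, ρ x 1 w = fun φ => (φ x : ℂ) * w φ := by
    intro x
    conv_lhs => rw [hw_expand, map_sum]
    funext φ
    simp only [map_smul, hρ, one_mul, Finset.sum_apply, Pi.smul_apply, Pi.single_apply,
      smul_eq_mul, mul_ite, mul_one, mul_zero]
    have hone : ∀ ψ : A →* ℂˣ, (1 : A →* ℂˣ) * ψ = ψ := fun ψ => one_mul ψ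
    simp [hone, Finset.sum_ite_eq, mul_comm]
  -- averaging: project onto the ψ₀ coordinate
  set v : (A →* ℂˣ) → ℂ := ∑ x : A, ((ψ₀ x : ℂ))⁻¹ • ρ x 1 w with hv
  have hvW : v ∈ W := Submodule.sum_mem _ fun x _ => W.smul_mem _ (hW x 1 w hwW)
  have hv_eq : v = ((Fintype.card A : ℂ) * w ψ₀) • (Pi.single ψ₀ (1 : ℂ) : (A →* ℂˣ) → ℂ) := by
    funext φ
    have : v φ = ∑ x : A, ((ψ₀ x : ℂ))⁻¹ * ((φ x : ℂ) * w φ) := by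
      rw [hv]
      rw [Finset.sum_apply]
      refine Finset.sum_congr rfl fun x _ => ?_
      rw [hρ1 x]
      simp
    rw [this]
    have : ∑ x : A, ((ψ₀ x : ℂ))⁻¹ * ((φ x : ℂ) * w φ) =
        (∑ x : A, ((ψ₀ x : ℂ))⁻¹ * (φ x : ℂ)) * w φ := by
      rw [Finset.sum_mul]
      exact Finset.sum_congr rfl fun x _ => by ring
    rw [this, char_orth A φ ψ₀]
    simp [Pi.single_apply]
    split_ifs with hfe
    · rw [hfe]
    · simp
  -- hence the basis vector e_{ψ₀} lies in W
  have hcard : ((Fintype.card A : ℂ) * w ψ₀) ≠ 0 := by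
    apply mul_ne_zero _ hψ₀'
    exact_mod_cast Fintype.card_ne_zero
  have hsingle : Pi.single ψ₀ (1 : ℂ) ∈ W := by
    have : Pi.single ψ₀ (1 : ℂ) = ((Fintype.card A : ℂ) * w ψ₀)⁻¹ • v := by
      rw [hv_eq, smul_smul, inv_mul_cancel₀ hcard, one_smul]
    rw [this]
    exact W.smul_mem _ hvW
  -- move the basis vector around: all e_χ lie in W
  have hall : ∀ χ : A →* ℂˣ, Pi.single χ (1 : ℂ) ∈ W := by
    intro χ
    have hmem := hW 1 (χ * ψ₀⁻¹) _ hsingle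
    rw [hρ 1 (χ * ψ₀⁻¹) ψ₀] at hmem
    have he : χ * ψ₀⁻¹ * ψ₀ = χ := inv_mul_cancel_right χ ψ₀
    rw [he] at hmem
    simpa using hmem
  -- conclude
  rw [Submodule.eq_top_iff']
  intro u
  have hu : u = ∑ χ : (A →* ℂˣ), u χ • (Pi.single χ (1 : ℂ) : (A →* ℂˣ) → ℂ) := by
    funext φ
    simp [Finset.sum_apply, Pi.single_apply]
  rw [hu]
  exact Submodule.sum_mem _ fun χ _ => W.smul_mem _ (hall χ)
end

section
/- Let q and φ be positive integers with gcd(φ, q) = 1, and let g, h be invertible n×n integer matrices with h^q = 1 and g^{-1} h g = h^φ, acting on L = ℤⁿ by right multiplication. Write L^g = {α ∈ ℤⁿ : α g = α} and L^h = {α ∈ ℤⁿ : α h = α}. Then for any group homomorphism f : (ℤⁿ, +) → (ℂ*, ·) the following are equivalent: (i) there exist group homomorphisms ξ_g, ξ_h : (ℤⁿ, +) → (ℂ*, ·) with ξ_g(α) = 1 for all α ∈ L^g, ξ_h(α) = 1 for all α ∈ L^h, and ξ_g( α·g^{-1}(h − 1) ) · ξ_h( α·(g^{-1} − Σ_{i=0}^{φ−1}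 h^i) ) = f(α) for all α ∈ ℤⁿ; (ii) f(α) = 1 for every α ∈ ℤⁿ with α·g^{-1}(h − 1)(1 − g) = 0. -/
open Matrix

/-!
Put `A = g⁻¹(h - 1)` and `B = g⁻¹ - ∑_{i<φ} hⁱ`. Since `g⁻¹ h g = h^φ` and
`(∑_{i<φ} hⁱ)(h - 1) = h^φ - 1`, one has `A(1 - g) = B(h - 1)`; hence `α A (1 - g) = 0` says
exactly that `α A ∈ L^g` and `α B ∈ L^h`, which gives (i) ⇒ (ii). Conversely, the pairs
`(ξ_g, ξ_h)` in (i) are the characters of `(L × L) ⧸ (L^g × L^h)` whose pullback along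
`α ↦ (α A, α B)` is `f`. The kernel of that map is `{α | α A (1 - g) = 0}`, and `ℂˣ` is a
divisible, hence injective, abelian group, so `f` extends as soon as it kills this kernel.
-/

noncomputable instance : DivisibleBy (Additive ℂˣ) ℤ :=
  divisibleByOfSMulRightSurj _ _ fun {n} hn a =>
    ⟨Additive.ofMul (Units.mk0 (Complex.exp (Complex.log a.toMul / n)) (Complex.exp_ne_zero _)),
      by
        change Additive.ofMul (_ ^ n) = a
        ext
        have hn' : (n : ℂ) ≠ 0 := by exact_mod_cast hn
        simp [← Complex.exp_int_mul, mul_div_cancel₀, hn', Complex.exp_log]⟩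

noncomputable instance : Module.Injective ℤ (Additive ℂˣ) :=
  (Module.Baer.of_divisible _).injective

universe v

namespace Module.Injective

variable {R M N N₁ N₂ : Type*} {D : Type v} [Ring R] [AddCommGroup M] [Module R M] [AddCommGroup N]
  [Module R N] [AddCommGroup N₁] [Module R N₁] [AddCommGroup N₂] [Module R N₂]
  [AddCommGroup D] [Module R D] [Small.{v} R] [Module.Injective R D]

theorem exists_comp_eq_of_ker_le (ψ : M →ₗ[R] N) (f : M →ₗ[R] D)
    (h : LinearMap.ker ψ ≤ LinearMap.ker f) : ∃ Φ : N →ₗ[R] D, Φ ∘ₗ ψ = f := by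
  obtain ⟨Φ, hΦ⟩ := extension_property R D _ _ ((LinearMap.ker ψ).liftQ ψ le_rfl)
    (LinearMap.ker_eq_bot.mp (Submodule.ker_liftQ_eq_bot _ _ _ le_rfl))
    ((LinearMap.ker ψ).liftQ f h)
  exact ⟨Φ, LinearMap.ext fun m => LinearMap.congr_fun hΦ (Submodule.Quotient.mk m)⟩

theorem exists_add_comp_eq (a : M →ₗ[R] N₁) (b : M →ₗ[R] N₂) (S₁ : Submodule R N₁)
    (S₂ : Submodule R N₂) (f : M →ₗ[R] D) (hf : ∀ m, a m ∈ S₁ → b m ∈ S₂ → f m = 0) :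
    ∃ (ξ₁ : N₁ →ₗ[R] D) (ξ₂ : N₂ →ₗ[R] D), S₁ ≤ LinearMap.ker ξ₁ ∧ S₂ ≤ LinearMap.ker ξ₂ ∧
      ∀ m, ξ₁ (a m) + ξ₂ (b m) = f m := by
  obtain ⟨Φ, hΦ⟩ := exists_comp_eq_of_ker_le ((S₁.prod S₂).mkQ ∘ₗ a.prod b) f fun m hm => by
    simp only [LinearMap.mem_ker, LinearMap.comp_apply, Submodule.mkQ_apply,
      Submodule.Quotient.mk_eq_zero, LinearMap.prod_apply, Submodule.mem_prod] at hm
    exact hf m hm.1 hm.2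
  have hΦS : ∀ x ∈ S₁.prod S₂, Φ ((S₁.prod S₂).mkQ x) = 0 := fun x hx => by
    rw [Submodule.mkQ_apply, (Submodule.Quotient.mk_eq_zero _).2 hx, map_zero]
  refine ⟨Φ ∘ₗ (S₁.prod S₂).mkQ ∘ₗ LinearMap.inl R N₁ N₂,
    Φ ∘ₗ (S₁.prod S₂).mkQ ∘ₗ LinearMap.inr R N₁ N₂, fun s hs => hΦS (s, 0) ⟨hs, zero_mem S₂⟩,
    fun s hs => hΦS (0, s) ⟨zero_mem S₁, hs⟩, fun m => ?_⟩
  rw [← LinearMap.congr_fun hΦ m]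
  simp only [LinearMap.comp_apply, ← map_add]
  congr 2
  simp

end Module.Injective

theorem Units.inv_mul_sub_one_mul_one_sub {R : Type*} [Ring R] {g h : Rˣ} {φ : ℕ}
    (hgh : g⁻¹ * h * g = h ^ φ) :
    (↑g⁻¹ * (↑h - 1) * (1 - ↑g) : R) = (↑g⁻¹ - ∑ i ∈ Finset.range φ, (h : R) ^ i) * (↑h - 1) := by
  have hgh' : (↑g⁻¹ * ↑h * ↑g : R) = ↑h ^ φ := by exact_mod_cast congr(Units.val $hgh)
  rw [sub_mul _ (∑ i ∈ Finset.range φ, _), geom_sum_mul, ← hgh']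
  simp only [mul_sub, sub_mul, mul_one, Units.inv_mul]

namespace Matrix

variable {m n R : Type*} [Fintype m] [Fintype n] [DecidableEq n] [Ring R]

theorem vecMul_one_sub_eq_zero_iff (v : n → R) (G : Matrix n n R) :
    vecMul v (1 - G) = 0 ↔ vecMul v G = v := by
  rw [vecMul_sub, vecMul_one, sub_eq_zero, eq_comm]

theorem vecMul_sub_one_eq_zero_iff (v : n → R) (G : Matrix n n R) :
    vecMul v (G - 1) = 0 ↔ vecMul v G = v := by
  rw [vecMul_sub, vecMul_one, sub_eq_zero]

theorem vecMul_mul_one_sub_eq_zero_iff {A B : Matrix m n R} {G H : Matrix n n R}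
    (hAB : A * (1 - G) = B * (H - 1)) (v : m → R) :
    vecMul v (A * (1 - G)) = 0 ↔
      vecMul (vecMul v A) G = vecMul v A ∧ vecMul (vecMul v B) H = vecMul v B := by
  rw [← vecMul_vecMul, vecMul_one_sub_eq_zero_iff]
  refine ⟨fun hA => ⟨hA, ?_⟩, And.left⟩
  rwa [← vecMul_sub_one_eq_zero_iff, vecMul_vecMul, ← hAB, ← vecMul_vecMul,
    vecMul_one_sub_eq_zero_iff]

end Matrix

theorem splitting_lift_obstruction_general
    (n φ : ℕ)
    (g h : (Matrix (Fin n) (Fin n) ℤ)ˣ)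
    (hgh : g⁻¹ * h * g = h ^ φ)
    (f : (Fin n → ℤ) → ℂˣ) (hf : ∀ α β, f (α + β) = f α * f β) :
    (∃ ξg ξh : (Fin n → ℤ) → ℂˣ,
        (∀ α β, ξg (α + β) = ξg α * ξg β) ∧
        (∀ α β, ξh (α + β) = ξh α * ξh β) ∧
        (∀ α, Matrix.vecMul α (g : Matrix (Fin n) (Fin n) ℤ) = α → ξg α = 1) ∧
        (∀ α, Matrix.vecMul α (h : Matrix (Fin n) (Fin n) ℤ) = α → ξh α = 1) ∧
        (∀ α, ξg (Matrix.vecMul α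
              (((g⁻¹ : (Matrix (Fin n) (Fin n) ℤ)ˣ) : Matrix (Fin n) (Fin n) ℤ) *
                ((h : Matrix (Fin n) (Fin n) ℤ) - 1))) *
            ξh (Matrix.vecMul α
              (((g⁻¹ : (Matrix (Fin n) (Fin n) ℤ)ˣ) : Matrix (Fin n) (Fin n) ℤ) -
                ∑ i ∈ Finset.range φ, (h : Matrix (Fin n) (Fin n) ℤ) ^ i)) = f α)) ↔
      (∀ α : Fin n → ℤ,
        Matrix.vecMul α
            (((g⁻¹ : (Matrix (Fin n) (Fin n) ℤ)ˣ) : Matrix (Fin n) (Fin n) ℤ) *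
              ((h : Matrix (Fin n) (Fin n) ℤ) - 1) *
              (1 - (g : Matrix (Fin n) (Fin n) ℤ))) = 0 → f α = 1) := by
  have hker := Matrix.vecMul_mul_one_sub_eq_zero_iff (Units.inv_mul_sub_one_mul_one_sub hgh)
  constructor
  · rintro ⟨ξg, ξh, -, -, hξg, hξh, hξ⟩ α hα
    obtain ⟨hαg, hαh⟩ := (hker α).1 hα
    rw [← hξ α, hξg _ hαg, hξh _ hαh, one_mul]
  · intro hf₁
    obtain ⟨ξ₁, ξ₂, hξ₁, hξ₂, hξ⟩ := Module.Injective.exists_add_comp_eq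
      (vecMulLinear _) (vecMulLinear _)
      (LinearMap.eqLocus (vecMulLinear (g : Matrix (Fin n) (Fin n) ℤ)) LinearMap.id)
      (LinearMap.eqLocus (vecMulLinear (h : Matrix (Fin n) (Fin n) ℤ)) LinearMap.id)
      (AddMonoidHom.mk' (fun α => Additive.ofMul (f α))
        fun α β => congrArg Additive.ofMul (hf α β)).toIntLinearMap
      fun α hαg hαh => congrArg Additive.ofMul (hf₁ α ((hker α).2 ⟨hαg, hαh⟩))
    exact ⟨fun α => (ξ₁ α).toMul, fun α => (ξ₂ α).toMul, fun α β => congrArg _ (map_add ξ₁ α β),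
      fun α β => congrArg _ (map_add ξ₂ α β), fun α hα => congrArg _ (hξ₁ hα),
      fun α hα => congrArg _ (hξ₂ hα), fun α => congrArg Additive.toMul (hξ α)⟩

/-- Let `q`, `φ` be positive integers with `gcd(φ, q) = 1`, and `g`, `h` invertible
`n×n` integer matrices with `h^q = 1` and `g⁻¹ h g = h^φ`, acting on `L = ℤⁿ` by right
multiplication.  For any group homomorphism `f : (ℤⁿ, +) → (ℂ*, ·)`, the following are
equivalent:
(i) there exist group homomorphisms `ξ_g, ξ_h : (ℤⁿ, +) → (ℂ*, ·)` trivial on the fixed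
lattices `L^g`, `L^h` respectively, with
`ξ_g(α·g⁻¹(h − 1)) · ξ_h(α·(g⁻¹ − Σ_{i<φ} h^i)) = f(α)` for all `α`;
(ii) `f(α) = 1` for every `α` with `α·g⁻¹(h − 1)(1 − g) = 0`. -/
theorem splitting_lift_obstruction
    (n q φ : ℕ) (hq : 0 < q) (hφ : 0 < φ) (hcop : Nat.Coprime φ q)
    (g h : (Matrix (Fin n) (Fin n) ℤ)ˣ)
    (hhq : h ^ q = 1) (hgh : g⁻¹ * h * g = h ^ φ)
    (f : (Fin n → ℤ) → ℂˣ) (hf : ∀ α β, f (α + β) = f α * f β) :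
    (∃ ξg ξh : (Fin n → ℤ) → ℂˣ,
        (∀ α β, ξg (α + β) = ξg α * ξg β) ∧
        (∀ α β, ξh (α + β) = ξh α * ξh β) ∧
        (∀ α, Matrix.vecMul α (g : Matrix (Fin n) (Fin n) ℤ) = α → ξg α = 1) ∧
        (∀ α, Matrix.vecMul α (h : Matrix (Fin n) (Fin n) ℤ) = α → ξh α = 1) ∧
        (∀ α, ξg (Matrix.vecMul α
              (((g⁻¹ : (Matrix (Fin n) (Fin n) ℤ)ˣ) : Matrix (Fin n) (Fin n) ℤ) *
                ((h : Matrix (Fin n) (Fin n) ℤ) - 1))) *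
            ξh (Matrix.vecMul α
              (((g⁻¹ : (Matrix (Fin n) (Fin n) ℤ)ˣ) : Matrix (Fin n) (Fin n) ℤ) -
                ∑ i ∈ Finset.range φ, (h : Matrix (Fin n) (Fin n) ℤ) ^ i)) = f α)) ↔
      (∀ α : Fin n → ℤ,
        Matrix.vecMul α
            (((g⁻¹ : (Matrix (Fin n) (Fin n) ℤ)ˣ) : Matrix (Fin n) (Fin n) ℤ) *
              ((h : Matrix (Fin n) (Fin n) ℤ) - 1) *
              (1 - (g : Matrix (Fin n) (Fin n) ℤ))) = 0 → f α = 1) :=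
  splitting_lift_obstruction_general n φ g h hgh f hf
end

section
/- Let A be an associative unital ℂ-algebra, m ≥ 1, u₁, …, u_m invertible elements of A, and c_{ij} ∈ ℂ* (1 ≤ i, j ≤ m) nonzero scalars such that u_i u_j = (c_{ji}/c_{ij}) u_j u_i for all i, j. For α, β ∈ ℤ^m define ĉ(α, β) = Π_{i,j} c_{ij}^{α_i β_j} and U(α) = ( Π_{i<j} c_{ij}^{α_i α_j} ) · u₁^{α₁} u₂^{α₂} ⋯ u_m^{α_m} · ( Π_i c_{ii}^{α_i(α_i − 1)/2} ). Then U(α + β) = ĉ(α, β) · U(α) · U(β) for all α, β ∈ ℤ^m. -/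
/-!
Write `U(α) = σ(α) · V(α)` with `V(α) = u₁^{α₁} ⋯ u_m^{α_m}` and a scalar `σ(α)`. Because the
scalars are central, `u_i^a u_j^b = q_{ij}^{ab} u_j^b u_i^a` with `q_{ij} = c_{ji}/c_{ij}`, so
sorting the word `V(α) V(β)` into `V(α + β)` costs the factor `∏_{j<i} q_{ij}^{α_i β_j}`. What is
left is an identity between monomials in the `c_{ij}`, checked exponent by exponent; on the
diagonal it is `C(a + b, 2) = a b + C(a, 2) + C(b, 2)`.
-/

/-- The twisted lattice operator
`U(α) = (Π_{i<j} c_{ij}^{α_i α_j}) · u₁^{α₁} ⋯ u_m^{α_m} · (Π_i c_{ii}^{α_i(α_i−1)/2})`,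
where the ordered product is taken in increasing index order. -/
noncomputable def latticeOp {A : Type*} [Ring A] [Algebra ℂ A] {m : ℕ}
    (u : Fin m → Aˣ) (c : Fin m → Fin m → ℂˣ) (α : Fin m → ℤ) : A :=
  algebraMap ℂ A (∏ i, ∏ j ∈ Finset.Ioi i, ((c i j : ℂ)) ^ (α i * α j)) *
    (((List.finRange m).map fun i => ((u i ^ α i : Aˣ) : A)).prod) *
    algebraMap ℂ A (∏ i, ((c i i : ℂ)) ^ (α i * (α i - 1) / 2))

theorem SemiconjBy.zpow_right_of_mul_left {G : Type*} [Group G] {a x t : G}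
    (h : SemiconjBy a x (t * x)) (ht : Commute t x) (n : ℤ) :
    SemiconjBy a (x ^ n) (t ^ n * x ^ n) := by
  simpa only [ht.mul_zpow] using h.zpow_right n

theorem zpow_mul_zpow_of_mul_eq_mul {G : Type*} [Group G] {x y z : G} (hzx : Commute z x)
    (hzy : Commute z y) (h : x * y = z * (y * x)) (a b : ℤ) :
    x ^ a * y ^ b = z ^ (a * b) * (y ^ b * x ^ a) := by
  have hxy : SemiconjBy x (y ^ b) (z ^ b * y ^ b) :=
    (show SemiconjBy x y (z * y) by rw [SemiconjBy, h, mul_assoc]).zpow_right_of_mul_left hzy b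
  -- Swap roles: conjugation by `y ^ b` scales `x` by a central factor, which `zpow` iterates.
  have hyx : SemiconjBy (y ^ b)⁻¹ x (z ^ b * x) := by
    rw [SemiconjBy.inv_symm_left_iff, SemiconjBy, ← mul_assoc, ← (hzy.zpow_zpow b b).eq, hxy.eq]
  have hyxa := SemiconjBy.inv_symm_left_iff.mp (hyx.zpow_right_of_mul_left (hzx.zpow_left b) a)
  rw [← hyxa.eq, ← zpow_mul, mul_comm b a, ← mul_assoc, ← (hzy.zpow_zpow _ b).eq, mul_assoc]

section TwistedProducts

variable {G K : Type*} [Group G] [CommGroup K]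

theorem List.prod_ofFn_mul_of_forall_mul_eq (φ : K →* G) (hφ : ∀ k g, Commute (φ k) g)
    {n : ℕ} (x : Fin n → G) (w : Fin n → K) (y : G)
    (hxy : ∀ i, x i * y = φ (w i) * (y * x i)) :
    (List.ofFn x).prod * y = φ (∏ i, w i) * (y * (List.ofFn x).prod) := by
  induction n with
  | zero => simp
  | succ n ih =>
    rw [List.ofFn_succ, List.prod_cons, Fin.prod_univ_succ, map_mul, mul_assoc,
      ih (fun i => x i.succ) (fun i => w i.succ) fun i => hxy i.succ, ← mul_assoc,
      ← (hφ _ _).eq, mul_assoc, ← mul_assoc (x 0), hxy 0]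
    simp only [mul_assoc]
    exact (hφ _ _).left_comm _

theorem List.prod_ofFn_mul_prod_ofFn (φ : K →* G) (hφ : ∀ k g, Commute (φ k) g)
    {n : ℕ} (x y : Fin n → G) (w : Fin n → Fin n → K)
    (hxy : ∀ i j, j < i → x i * y j = φ (w i j) * (y j * x i)) :
    (List.ofFn x).prod * (List.ofFn y).prod =
      φ (∏ j, ∏ i ∈ Finset.Ioi j, w i j) * (List.ofFn fun i => x i * y i).prod := by
  induction n with
  | zero => simp
  | succ n ih =>
    have hpass := List.prod_ofFn_mul_of_forall_mul_eq φ hφ (fun i => x i.succ)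
      (fun i => w i.succ 0) (y 0) fun i => hxy i.succ 0 i.succ_pos
    have htail := ih (fun i => x i.succ) (fun i => y i.succ) (fun i j => w i.succ j.succ)
      fun i j hji => hxy i.succ j.succ (Fin.succ_lt_succ_iff.mpr hji)
    simp only [List.ofFn_succ, List.prod_cons, Fin.prod_univ_succ, Fin.prod_Ioi_zero,
      Fin.prod_Ioi_succ, map_mul, mul_assoc]
    rw [← mul_assoc _ (y 0), hpass]
    simp only [mul_assoc]
    rw [htail, ← (hφ _ (x 0)).left_comm, ← (hφ _ (y 0)).left_comm,
      ← (hφ _ (x 0)).left_comm]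

end TwistedProducts

theorem Int.add_mul_add_sub_one_div_two (a b : ℤ) :
    (a + b) * (a + b - 1) / 2 = a * b + a * (a - 1) / 2 + b * (b - 1) / 2 := by
  obtain ⟨x, hx⟩ := Int.even_mul_pred_self a
  obtain ⟨y, hy⟩ := Int.even_mul_pred_self b
  rw [show (a + b) * (a + b - 1) = a * (a - 1) + b * (b - 1) + 2 * (a * b) by ring, hx, hy]
  omega

section LatticeScalar

variable {K : Type*} [CommGroup K] {m : ℕ}

def latticeScalar (c : Fin m → Fin m → K) (α : Fin m → ℤ) : K :=
  (∏ i, ∏ j ∈ Finset.Ioi i, c i j ^ (α i * α j)) * ∏ i, c i i ^ (α i * (α i - 1) / 2)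

theorem latticeScalar_add (c : Fin m → Fin m → K) (α β : Fin m → ℤ) :
    latticeScalar c (α + β) =
      (∏ i, ∏ j, c i j ^ (α i * β j)) * latticeScalar c α * latticeScalar c β *
        ∏ j, ∏ i ∈ Finset.Ioi j, (c j i / c i j) ^ (α i * β j) := by
  have hIoi (f : Fin m → Fin m → K) (e : Fin m → Fin m → ℤ) :
      ∏ i, ∏ j ∈ Finset.Ioi i, f i j ^ e i j =
        ∏ i, ∏ j, f i j ^ (if i < j then e i j else 0) := by
    simp [Finset.prod_ite, Finset.filter_lt_eq_Ioi]
  have hdiag (t : Fin m → ℤ) :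
      ∏ i, c i i ^ t i = ∏ i, ∏ j, c i j ^ (if i = j then t i else 0) := by
    simp
  have hcross : ∏ j, ∏ i ∈ Finset.Ioi j, (c j i / c i j) ^ (α i * β j) =
      ∏ i, ∏ j, c i j ^ ((if i < j then α j * β i else 0) - if j < i then α i * β j else 0) := by
    simp only [zpow_sub, ← div_eq_mul_inv, div_zpow, Finset.prod_div_distrib]
    rw [hIoi c, hIoi (fun j i => c i j), Finset.prod_comm (f := fun j i => c i j ^ _)]
  rw [hcross]
  simp only [latticeScalar, hIoi c, hdiag, ← Finset.prod_mul_distrib, ← zpow_add]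
  refine Finset.prod_congr rfl fun i _ => Finset.prod_congr rfl fun j _ => congrArg _ ?_
  rcases lt_trichotomy i j with h | rfl | h
  · simp [h, h.not_gt, h.ne]
    ring
  · simp [Int.add_mul_add_sub_one_div_two]
  · simp [h, h.not_gt, h.ne']

end LatticeScalar

theorem latticeOp_eq_smul {A : Type*} [Ring A] [Algebra ℂ A] {m : ℕ} (u : Fin m → Aˣ)
    (c : Fin m → Fin m → ℂˣ) (α : Fin m → ℤ) :
    latticeOp u c α =
      ((latticeScalar c α : ℂˣ) : ℂ) • (((List.ofFn fun i => u i ^ α i).prod : Aˣ) : A) := by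
  rw [latticeOp, mul_assoc, ← Algebra.commutes, ← mul_assoc, ← map_mul, ← Algebra.smul_def]
  congr 1
  · push_cast [latticeScalar, Units.val_zpow_eq_zpow_val]
    rfl
  · rw [List.ofFn_eq_map, ← Units.coeHom_apply, map_list_prod, List.map_map]
    rfl

theorem latticeOp_mul_general
    (A : Type*) [Ring A] [Algebra ℂ A] (m : ℕ)
    (u : Fin m → Aˣ) (c : Fin m → Fin m → ℂˣ)
    (hcomm : ∀ i j, ((u i : A)) * (u j : A) =
      algebraMap ℂ A ((c j i : ℂ) / (c i j : ℂ)) * ((u j : A) * (u i : A))) :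
    ∀ α β : Fin m → ℤ,
      latticeOp u c (α + β) =
        algebraMap ℂ A (∏ i, ∏ j, ((c i j : ℂ)) ^ (α i * β j)) *
          latticeOp u c α * latticeOp u c β := by
  intro α β
  let φ : ℂˣ →* Aˣ := Units.map (algebraMap ℂ A : ℂ →* A)
  have hφ (k : ℂˣ) (g : Aˣ) : Commute (φ k) g := Units.ext (Algebra.commutes _ _)
  have hu (i j : Fin m) : u i * u j = φ (c j i / c i j) * (u j * u i) := by
    ext
    rw [Units.val_mul, Units.val_mul, Units.coe_map, Units.val_div_eq_div_val]
    exact hcomm i j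
  have hprod := List.prod_ofFn_mul_prod_ofFn φ hφ (fun i => u i ^ α i) (fun i => u i ^ β i)
    (fun i j => (c j i / c i j) ^ (α i * β j)) fun i j _ => by
      rw [zpow_mul_zpow_of_mul_eq_mul (hφ _ _) (hφ _ _) (hu i j), map_zpow]
  rw [latticeOp_eq_smul, latticeOp_eq_smul, latticeOp_eq_smul, mul_assoc, smul_mul_smul_comm,
    ← Algebra.smul_def, smul_smul, ← Units.val_mul (List.ofFn _).prod, hprod, Units.val_mul,
    Units.coe_map, MonoidHom.coe_coe, ← Algebra.smul_def, smul_smul]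
  congr 1
  · rw [latticeScalar_add]
    push_cast [Units.val_zpow_eq_zpow_val]
    ring
  · simp only [Pi.add_apply, zpow_add]

/-- Let `A` be an associative unital `ℂ`-algebra, `u₁, …, u_m` invertible elements, and
`c_{ij} ∈ ℂ*` scalars with `u_i u_j = (c_{ji}/c_{ij}) u_j u_i`.  With
`ĉ(α, β) = Π_{i,j} c_{ij}^{α_i β_j}` and `U(α)` as above, one has
`U(α + β) = ĉ(α, β) · U(α) · U(β)` for all `α, β ∈ ℤ^m`. -/
theorem latticeOp_mul
    (A : Type*) [Ring A] [Algebra ℂ A] (m : ℕ) (hm : 1 ≤ m)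
    (u : Fin m → Aˣ) (c : Fin m → Fin m → ℂˣ)
    (hcomm : ∀ i j, ((u i : A)) * (u j : A) =
      algebraMap ℂ A ((c j i : ℂ) / (c i j : ℂ)) * ((u j : A) * (u i : A))) :
    ∀ α β : Fin m → ℤ,
      latticeOp u c (α + β) =
        algebraMap ℂ A (∏ i, ∏ j, ((c i j : ℂ)) ^ (α i * β j)) *
          latticeOp u c α * latticeOp u c β :=
  latticeOp_mul_general A m u c hcomm
end

section
/- Let B be a nondegenerate symmetric bilinear form on L = ℤⁿ with integer values, and let g be an n×n integer matrix of finite order (g^m = 1 for some m ≥ 1) with B(α g, β g) = B(α, β) for all α, β. Let L^g = {v ∈ ℤⁿ : v g = v}. Then for x ∈ ℤⁿ, the class of x in the quotient group ℤⁿ / ℤⁿ(1 − g) is a torsion element if and only if B(x, v) = 0 for every v ∈ L^g. Equivalently, the torsion subgroup of ℤⁿ / ℤⁿ(1 − g) is exactly L_g^⊥ / ℤⁿ(1 − g), where L_g^⊥ = {x ∈ ℤⁿ : B(x, v) = 0 for all v ∈ L^g}. -/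
/-!
Write `B(α, β) = α G βᵀ` and `N = 1 + g + ⋯ + g^(m-1)`. Since `g` is a `B`-isometry with
inverse `g^(m-1)`, `N` is `B`-self-adjoint, and `N` maps into the fixed lattice because
`N g = N`. If `x` is orthogonal to the fixed lattice, then `B(x N, w) = B(x, w N) = 0` for all `w`,
so `x N = 0` by nondegeneracy; as `x g ≡ x` modulo `ℤⁿ(1 - g)`, this gives
`m x ≡ x N = 0`. Conversely, `B(·, v)` vanishes on `ℤⁿ(1 - g)` when `v` is fixed, so it
descends to the quotient, where it kills torsion because `ℤ` is torsion-free.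
-/

open Matrix Finset

lemma geom_sum_mul_eq_self_of_pow_eq_one {R : Type*} [Ring R] {x : R} {m : ℕ}
    (hx : x ^ m = 1) : (∑ i ∈ range m, x ^ i) * x = ∑ i ∈ range m, x ^ i := by
  have h := geom_sum_mul x m
  rwa [hx, sub_self, mul_sub, mul_one, sub_eq_zero] at h

lemma sum_range_pow_sub_eq_of_pow_eq_one {R : Type*} [Ring R] {x : R} {m : ℕ}
    (hx : x ^ m = 1) : ∑ i ∈ range m, x ^ (m - i) = ∑ i ∈ range m, x ^ i := by
  calc ∑ i ∈ range m, x ^ (m - i)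
      = ∑ i ∈ range m, x ^ (m - 1 - i + 1) :=
        sum_congr rfl fun i hi => by
          rw [show m - 1 - i + 1 = m - i by have := mem_range.mp hi; omega]
    _ = ∑ i ∈ range m, x ^ i * x := by
        rw [sum_range_reflect (fun i => x ^ (i + 1)) m]
        exact sum_congr rfl fun i _ => pow_succ x i
    _ = ∑ i ∈ range m, x ^ i := by rw [← sum_mul, geom_sum_mul_eq_self_of_pow_eq_one hx]

section Isometry

variable {ι R : Type*} [Fintype ι] [DecidableEq ι] [CommRing R] {G g : Matrix ι ι R}

lemma vecMul_pow_dotProduct_vecMul_pow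
    (hinv : ∀ α β : ι → R, α ᵥ* g ᵥ* G ⬝ᵥ β ᵥ* g = α ᵥ* G ⬝ᵥ β) (i : ℕ) (α β : ι → R) :
    α ᵥ* (g ^ i) ᵥ* G ⬝ᵥ β ᵥ* (g ^ i) = α ᵥ* G ⬝ᵥ β := by
  induction i generalizing α β with
  | zero => simp
  | succ i ih => rw [pow_succ, ← vecMul_vecMul, ← vecMul_vecMul, hinv, ih]

lemma vecMul_pow_dotProduct_eq_dotProduct_vecMul_pow_sub
    (hinv : ∀ α β : ι → R, α ᵥ* g ᵥ* G ⬝ᵥ β ᵥ* g = α ᵥ* G ⬝ᵥ β) {m i : ℕ} (hgm : g ^ m = 1)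
    (hi : i ≤ m) (α β : ι → R) :
    α ᵥ* (g ^ i) ᵥ* G ⬝ᵥ β = α ᵥ* G ⬝ᵥ β ᵥ* (g ^ (m - i)) := by
  have hβ : β ᵥ* (g ^ (m - i)) ᵥ* (g ^ i) = β := by
    rw [vecMul_vecMul, ← pow_add, Nat.sub_add_cancel hi, hgm, vecMul_one]
  rw [← vecMul_pow_dotProduct_vecMul_pow hinv i α (β ᵥ* (g ^ (m - i))), hβ]

lemma vecMul_geom_sum_dotProduct
    (hinv : ∀ α β : ι → R, α ᵥ* g ᵥ* G ⬝ᵥ β ᵥ* g = α ᵥ* G ⬝ᵥ β) {m : ℕ} (hgm : g ^ m = 1)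
    (α β : ι → R) :
    α ᵥ* (∑ i ∈ range m, g ^ i) ᵥ* G ⬝ᵥ β = α ᵥ* G ⬝ᵥ β ᵥ* (∑ i ∈ range m, g ^ i) := by
  conv_rhs => rw [← sum_range_pow_sub_eq_of_pow_eq_one hgm]
  rw [vecMul_sum, vecMul_sum, sum_vecMul, sum_dotProduct, dotProduct_sum]
  exact sum_congr rfl fun i hi =>
    vecMul_pow_dotProduct_eq_dotProduct_vecMul_pow_sub hinv hgm (mem_range.mp hi).le α β

lemma vecMul_geom_sum_eq_zero
    (hinv : ∀ α β : ι → R, α ᵥ* g ᵥ* G ⬝ᵥ β ᵥ* g = α ᵥ* G ⬝ᵥ β) {m : ℕ} (hgm : g ^ m = 1)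
    (hG : G.SeparatingLeft) {x : ι → R} (hx : ∀ v, v ᵥ* g = v → x ᵥ* G ⬝ᵥ v = 0) :
    x ᵥ* (∑ i ∈ range m, g ^ i) = 0 := by
  refine hG.eq_zero_of_vecMul_eq_zero (dotProduct_eq_zero _ fun w => ?_)
  rw [vecMul_geom_sum_dotProduct hinv hgm]
  exact hx _ (by rw [vecMul_vecMul, geom_sum_mul_eq_self_of_pow_eq_one hgm])

lemma vecMul_one_sub_dotProduct_eq_zero
    (hinv : ∀ α β : ι → R, α ᵥ* g ᵥ* G ⬝ᵥ β ᵥ* g = α ᵥ* G ⬝ᵥ β) {v : ι → R} (hv : v ᵥ* g = v)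
    (α : ι → R) : α ᵥ* (1 - g) ᵥ* G ⬝ᵥ v = 0 := by
  have h := hinv α v
  rw [hv] at h
  rw [vecMul_sub, vecMul_one, sub_vecMul, sub_dotProduct, h, sub_self]

end Isometry

section Coinvariants

variable {ι R : Type*} [Fintype ι] [DecidableEq ι] [CommRing R] {g : Matrix ι ι R}

local notation "coinv" g => (ι → R) ⧸ LinearMap.range (vecMulLinear (1 - g))

lemma mk_vecMul_pow (x : ι → R) (i : ℕ) :
    (Submodule.Quotient.mk (x ᵥ* (g ^ i)) : coinv g) = Submodule.Quotient.mk x := by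
  induction i with
  | zero => rw [pow_zero, vecMul_one]
  | succ i ih =>
    rw [← ih, pow_succ, ← vecMul_vecMul, eq_comm, Submodule.Quotient.eq]
    exact ⟨x ᵥ* (g ^ i), by rw [vecMulLinear_apply, vecMul_sub, vecMul_one]⟩

lemma mk_vecMul_geom_sum (x : ι → R) (m : ℕ) :
    (Submodule.Quotient.mk (x ᵥ* (∑ i ∈ range m, g ^ i)) : coinv g) =
      m • Submodule.Quotient.mk x := by
  rw [vecMul_sum, ← Submodule.mkQ_apply, map_sum]
  simp only [Submodule.mkQ_apply, mk_vecMul_pow, sum_const, card_range]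

lemma dotProduct_eq_zero_of_isOfFinAddOrder_mk [IsAddTorsionFree R] {G : Matrix ι ι R}
    (hinv : ∀ α β : ι → R, α ᵥ* g ᵥ* G ⬝ᵥ β ᵥ* g = α ᵥ* G ⬝ᵥ β) {x v : ι → R}
    (hx : IsOfFinAddOrder (Submodule.Quotient.mk x : coinv g)) (hv : v ᵥ* g = v) :
    x ᵥ* G ⬝ᵥ v = 0 := by
  let f := (dotProductBilin R R).flip (G *ᵥ v)
  have hf : ∀ y, f y = y ᵥ* G ⬝ᵥ v := fun y => by
    rw [LinearMap.flip_apply, dotProductBilin_apply_apply, dotProduct_mulVec]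
  have hrange : LinearMap.range (vecMulLinear (1 - g)) ≤ LinearMap.ker f := by
    rintro _ ⟨α, rfl⟩
    rw [LinearMap.mem_ker, hf, vecMulLinear_apply, vecMul_one_sub_dotProduct_eq_zero hinv hv]
  have h := ((Submodule.liftQ _ f hrange).toAddMonoidHom.isOfFinAddOrder hx).eq_zero'
  rwa [LinearMap.toAddMonoidHom_coe, Submodule.liftQ_apply, hf] at h

end Coinvariants

theorem torsion_iff_orthogonal_to_fixed_lattice_general
    (n : ℕ) (G : Matrix (Fin n) (Fin n) ℤ) (hnd : G.det ≠ 0)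
    (g : Matrix (Fin n) (Fin n) ℤ) (m : ℕ) (hm : 1 ≤ m) (hgm : g ^ m = 1)
    (hinv : ∀ α β : Fin n → ℤ,
      dotProduct (Matrix.vecMul (Matrix.vecMul α g) G) (Matrix.vecMul β g) =
        dotProduct (Matrix.vecMul α G) β) :
    ∀ x : Fin n → ℤ,
      IsOfFinAddOrder (Submodule.Quotient.mk x :
          (Fin n → ℤ) ⧸ LinearMap.range (Matrix.vecMulLinear (1 - g))) ↔
        ∀ v : Fin n → ℤ, Matrix.vecMul v g = v →
          dotProduct (Matrix.vecMul x G) v = 0 := by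
  intro x
  refine ⟨fun hx v hv => dotProduct_eq_zero_of_isOfFinAddOrder_mk hinv hx hv, fun hx => ?_⟩
  have hxN := vecMul_geom_sum_eq_zero hinv hgm (separatingLeft_iff_det_ne_zero.mpr hnd) hx
  refine isOfFinAddOrder_iff_nsmul_eq_zero.mpr ⟨m, hm, ?_⟩
  rw [← mk_vecMul_geom_sum, hxN, Submodule.Quotient.mk_zero]

/-- Let `B(α, β) = α G βᵀ` be a nondegenerate symmetric integer bilinear form on
`L = ℤⁿ` and `g` an integer matrix of finite order preserving `B`.  Then the class of
`x ∈ ℤⁿ` in `ℤⁿ / ℤⁿ(1 − g)` is a torsion element if and only if `B(x, v) = 0` for every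
`g`-fixed vector `v`; that is, the torsion subgroup of `ℤⁿ / ℤⁿ(1 − g)` is
`L_g^⊥ / ℤⁿ(1 − g)`. -/
theorem torsion_iff_orthogonal_to_fixed_lattice
    (n : ℕ) (G : Matrix (Fin n) (Fin n) ℤ) (hsymm : G.IsSymm) (hnd : G.det ≠ 0)
    (g : Matrix (Fin n) (Fin n) ℤ) (m : ℕ) (hm : 1 ≤ m) (hgm : g ^ m = 1)
    (hinv : ∀ α β : Fin n → ℤ,
      dotProduct (Matrix.vecMul (Matrix.vecMul α g) G) (Matrix.vecMul β g) =
        dotProduct (Matrix.vecMul α G) β) :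
    ∀ x : Fin n → ℤ,
      IsOfFinAddOrder (Submodule.Quotient.mk x :
          (Fin n → ℤ) ⧸ LinearMap.range (Matrix.vecMulLinear (1 - g))) ↔
        ∀ v : Fin n → ℤ, Matrix.vecMul v g = v →
          dotProduct (Matrix.vecMul x G) v = 0 :=
  torsion_iff_orthogonal_to_fixed_lattice_general n G hnd g m hm hgm hinv
end

section
/- Let G be a finite abelian group, V a finite-dimensional complex vector space of dimension d, ρ : G → GL(V) a representation, and B a nondegenerate symmetric bilinear form on V satisfying B(ρ(g)x, ρ(g)y) = B(x, y) for all g ∈ G and x, y ∈ V. Then the complex vector space of G-invariant symmetric bilinear forms on V, i.e. symmetric bilinear Q : V × V → ℂ with Q(ρ(g)x, ρ(g)y) = Q(x, y) for all g, x, y, has dimension at least d/2 (that is, twice its dimension is at least d). -/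
/-!
As `G` is finite abelian, `ρ` has a common eigenvector `v`, and `v` lies in a `G`-stable
subspace `U` of dimension at most two on which `B` is nondegenerate: the line `ℂ v` if
`B v v ≠ 0`, and otherwise `ℂ v + ℂ w` for a common eigenvector `w` in a `G`-stable complement
(Maschke) of the hyperplane `v^⊥`. Then `V = U ⊕ U^⊥` as representations, and `B` restricts to
nondegenerate invariant forms on both summands. Writing `W(-)` for the spaces of invariant
symmetric forms, pulling forms back along the two projections gives
`dim W(V) ≥ dim W(U) + dim W(U^⊥) ≥ 1 + dim U^⊥ / 2` by induction on `dim V`, and `dim U ≤ 2`.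
-/

open Module LinearMap.BilinForm
open LinearMap (BilinForm)

noncomputable def invariantSymmBilinForms (G : Type*) [Group G] (V : Type*) [AddCommGroup V]
    [Module ℂ V] (ρ : G →* (V →ₗ[ℂ] V)) :
    Submodule ℂ (V →ₗ[ℂ] V →ₗ[ℂ] ℂ) where
  carrier := {Q | (∀ x y, Q x y = Q y x) ∧ ∀ (g : G) (x y : V), Q (ρ g x) (ρ g y) = Q x y}
  add_mem' := by
    intro Q R hQ hR
    exact ⟨fun x y => by simp [hQ.1 x y, hR.1 x y],
      fun g x y => by simp [hQ.2 g x y, hR.2 g x y]⟩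
  zero_mem' := ⟨fun x y => by simp, fun g x y => by simp⟩
  smul_mem' := by
    intro cc Q hQ
    exact ⟨fun x y => by simp [hQ.1 x y], fun g x y => by simp [hQ.2 g x y]⟩

theorem Submodule.exists_common_eigenvector_of_commute {K V ι : Type*} [Field K]
    [IsAlgClosed K] [AddCommGroup V] [Module K V] [FiniteDimensional K V] {f : ι → End K V}
    (hf : ∀ i j, Commute (f i) (f j)) {p : Submodule K V} (hp : p ≠ ⊥)
    (hfp : ∀ i, ∀ x ∈ p, f i x ∈ p) : ∃ v ∈ p, v ≠ 0 ∧ ∀ i, ∃ c : K, f i v = c • v := by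
  induction p using WellFoundedLT.induction with
  | _ p ih =>
  by_cases hscalar : ∀ i, ∃ c : K, ∀ x ∈ p, f i x = c • x
  · choose c hc using hscalar
    obtain ⟨v, hvp, hv0⟩ := Submodule.exists_mem_ne_zero_of_ne_bot hp
    exact ⟨v, hvp, hv0, fun i => ⟨c i, hc i v hvp⟩⟩
  push Not at hscalar
  obtain ⟨i, hi⟩ := hscalar
  have : Nontrivial p := Submodule.nontrivial_iff_ne_bot.2 hp
  obtain ⟨μ, hμ⟩ := End.exists_eigenvalue ((f i).restrict (hfp i))
  obtain ⟨x, hx⟩ := hμ.exists_hasEigenvector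
  let q := p ⊓ (f i).eigenspace μ
  have hxq : (x : V) ∈ q :=
    ⟨x.2, End.eigenspace_restrict_le_eigenspace (f i) (hfp i) μ ⟨x, hx.1, rfl⟩⟩
  obtain ⟨v, hvq, hv0, hv⟩ := ih q
    (inf_le_left.lt_of_ne fun hqp => by
      obtain ⟨y, hyp, hy⟩ := hi μ
      exact hy (End.mem_eigenspace_iff.1 (hqp.ge hyp).2))
    (fun h => hx.2 (Subtype.ext ((Submodule.eq_bot_iff q).1 h _ hxq)))
    (fun j y hy => ⟨hfp j y hy.1, End.mapsTo_genEigenspace_of_comm (hf i j) μ 1 hy.2⟩)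
  exact ⟨v, hvq.1, hv0, hv⟩

namespace LinearMap.BilinForm

variable {K V : Type*} [Field K] [AddCommGroup V] [Module K V] {B : BilinForm K V}

theorem nondegenerate_restrict_span_pair (hB : B.IsRefl) {v w : V} (hvv : B v v = 0)
    (hvw : B v w ≠ 0) : (B.restrict (Submodule.span K {v, w})).Nondegenerate := by
  refine B.nondegenerate_restrict_of_disjoint_orthogonal hB (Submodule.disjoint_def.2 ?_)
  intro x hx hxo
  obtain ⟨a, b, rfl⟩ := Submodule.mem_span_pair.1 hx
  have hv := hxo v (Submodule.subset_span (by simp))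
  have hw := hxo w (Submodule.subset_span (by simp))
  simp only [map_add, map_smul, smul_eq_mul, hvv, mul_zero, zero_add] at hv hw
  obtain rfl : b = 0 := (mul_eq_zero.1 hv).resolve_right hvw
  have hwv : B w v ≠ 0 := fun h => hvw (hB w v h)
  obtain rfl : a = 0 := (mul_eq_zero.1 (by simpa using hw)).resolve_right hwv
  simp

theorem nondegenerate_restrict_orthogonal [FiniteDimensional K V] (hB : B.Nondegenerate)
    (hBrefl : B.IsRefl) {W : Submodule K V} (hW : (B.restrict W).Nondegenerate) :
    (B.restrict (B.orthogonal W)).Nondegenerate := by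
  rw [restrict_nondegenerate_iff_isCompl_orthogonal hBrefl, orthogonal_orthogonal hB hBrefl]
  exact (isCompl_orthogonal_of_restrict_nondegenerate hBrefl hW).symm

end LinearMap.BilinForm

theorem Submodule.projection_apply_of_mapsTo {R E : Type*} [Ring R] [AddCommGroup E] [Module R E]
    {p q : Submodule R E} (h : IsCompl p q) {f : E →ₗ[R] E} (hp : ∀ x ∈ p, f x ∈ p)
    (hq : ∀ x ∈ q, f x ∈ q) (x : E) : p.projection q h (f x) = f (p.projection q h x) := by
  conv_lhs => rw [← projection_add_projection_eq_self h x, map_add, map_add,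
    projection_apply_of_mem_right h (hq _ (projection_apply_mem _ _)), add_zero,
    projection_apply_of_mem_left h (hp _ (projection_apply_mem _ _))]

namespace Subrepresentation

variable {K G V : Type*} [CommRing K] [Group G] [AddCommGroup V] [Module K V]
  {ρ : Representation K G V}

def spanSingleton (v : V) (hv : ∀ g, ∃ c : K, ρ g v = c • v) : Subrepresentation ρ where
  toSubmodule := K ∙ v
  apply_mem_toSubmodule g x hx := by
    obtain ⟨a, rfl⟩ := Submodule.mem_span_singleton.1 hx
    obtain ⟨c, hc⟩ := hv g
    rw [map_smul, hc, smul_smul]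
    exact Submodule.smul_mem _ _ (Submodule.mem_span_singleton_self v)

def orthogonal (B : BilinForm K V) (hB : ∀ g x y, B (ρ g x) (ρ g y) = B x y)
    (U : Subrepresentation ρ) : Subrepresentation ρ where
  toSubmodule := B.orthogonal U.toSubmodule
  apply_mem_toSubmodule g x hx u hu := by
    rw [← ρ.self_inv_apply g u, hB]
    exact hx _ (U.apply_mem_toSubmodule g⁻¹ hu)

theorem exists_isCompl_toSubmodule [ComplementedLattice (Subrepresentation ρ)]
    (U : Subrepresentation ρ) : ∃ C : Subrepresentation ρ, IsCompl U.toSubmodule C.toSubmodule := by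
  obtain ⟨C, hC⟩ := ComplementedLattice.exists_isCompl U
  refine ⟨C, disjoint_iff.2 ?_, codisjoint_iff.2 ?_⟩
  · exact congrArg toSubmodule hC.inf_eq_bot
  · exact congrArg toSubmodule hC.sup_eq_top

end Subrepresentation

namespace invariantSymmBilinForms

variable {G V U : Type*} [Group G] [AddCommGroup V] [Module ℂ V] [AddCommGroup U] [Module ℂ U]
  {ρ : Representation ℂ G V}

theorem restrict_mem {B : BilinForm ℂ V} (hB : B ∈ invariantSymmBilinForms G V ρ)
    (W : Subrepresentation ρ) :
    B.restrict W.toSubmodule ∈ invariantSymmBilinForms G W.toSubmodule W.toRepresentation :=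
  ⟨fun x y => hB.1 x y, fun g x y => hB.2 g x y⟩

def comap {σ : Representation ℂ G U} (f : V →ₗ[ℂ] U) (hf : ∀ g x, f (ρ g x) = σ g (f x)) :
    invariantSymmBilinForms G U σ →ₗ[ℂ] invariantSymmBilinForms G V ρ where
  toFun Q := ⟨Q.1.compl₁₂ f f, fun x y => Q.2.1 (f x) (f y), fun g x y => by
    simp only [LinearMap.compl₁₂_apply, hf, Q.2.2 g]⟩
  map_add' _ _ := rfl
  map_smul' _ _ := rfl

@[simp]
theorem comap_apply_apply {σ : Representation ℂ G U} (f : V →ₗ[ℂ] U)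
    (hf : ∀ g x, f (ρ g x) = σ g (f x)) (Q : invariantSymmBilinForms G U σ) (x y : V) :
    (comap f hf Q : BilinForm ℂ V) x y = (Q : BilinForm ℂ U) (f x) (f y) :=
  rfl

theorem one_le_finrank [FiniteDimensional ℂ V] [Nontrivial V] {B : BilinForm ℂ V}
    (hB : B ∈ invariantSymmBilinForms G V ρ) (hBnd : B.Nondegenerate) :
    1 ≤ finrank ℂ (invariantSymmBilinForms G V ρ) :=
  Submodule.one_le_finrank_iff.2 ((Submodule.ne_bot_iff _).2 ⟨B, hB, hBnd.ne_zero⟩)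

theorem finrank_add_finrank_le [FiniteDimensional ℂ V] {W W' : Subrepresentation ρ}
    (h : IsCompl W.toSubmodule W'.toSubmodule) :
    finrank ℂ (invariantSymmBilinForms G W.toSubmodule W.toRepresentation) +
        finrank ℂ (invariantSymmBilinForms G W'.toSubmodule W'.toRepresentation) ≤
      finrank ℂ (invariantSymmBilinForms G V ρ) := by
  have hπ : ∀ g x, W.toSubmodule.projectionOnto _ h (ρ g x) =
      W.toRepresentation g (W.toSubmodule.projectionOnto _ h x) := fun g x =>
    Subtype.ext (Submodule.projection_apply_of_mapsTo h
      (fun _ hx => W.apply_mem_toSubmodule g hx) (fun _ hx => W'.apply_mem_toSubmodule g hx) x)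
  have hπ' : ∀ g x, W'.toSubmodule.projectionOnto _ h.symm (ρ g x) =
      W'.toRepresentation g (W'.toSubmodule.projectionOnto _ h.symm x) := fun g x =>
    Subtype.ext (Submodule.projection_apply_of_mapsTo h.symm
      (fun _ hx => W'.apply_mem_toSubmodule g hx) (fun _ hx => W.apply_mem_toSubmodule g hx) x)
  let E := (comap _ hπ).coprod (comap _ hπ')
  have hE : Function.Injective E := by
    rw [injective_iff_map_eq_zero]
    rintro ⟨Q, Q'⟩ hE0
    have hE0 := fun x y => LinearMap.congr_fun₂ (congrArg Subtype.val hE0) x y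
    refine Prod.ext (Subtype.ext (LinearMap.ext₂ fun x y => ?_))
      (Subtype.ext (LinearMap.ext₂ fun x y => ?_))
    · simpa [E] using hE0 x y
    · simpa [E] using hE0 x y
  have := Module.Free.of_divisionRing ℂ
    (invariantSymmBilinForms G W.toSubmodule W.toRepresentation)
  have := Module.Free.of_divisionRing ℂ
    (invariantSymmBilinForms G W'.toSubmodule W'.toRepresentation)
  simpa using LinearMap.finrank_le_finrank_of_injective hE

end invariantSymmBilinForms

section CommGroup

variable {G V : Type*} [CommGroup G] [Finite G] [AddCommGroup V] [Module ℂ V]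
  [FiniteDimensional ℂ V] {ρ : Representation ℂ G V} {B : BilinForm ℂ V}

theorem Representation.exists_eigenvector_apply_ne_zero
    (hBinv : ∀ g x y, B (ρ g x) (ρ g y) = B x y) {v : V} (hv : ∀ g, ∃ c : ℂ, ρ g v = c • v)
    (hBv : B v ≠ 0) : ∃ w : V, (∀ g, ∃ c : ℂ, ρ g w = c • w) ∧ B v w ≠ 0 := by
  let H := (Subrepresentation.spanSingleton v hv).orthogonal B hBinv
  obtain ⟨C, hC⟩ := H.exists_isCompl_toSubmodule
  have hC0 : C.toSubmodule ≠ ⊥ := by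
    intro hC0
    have hH : H.toSubmodule = ⊤ := by simpa [hC0] using hC.sup_eq_top
    refine hBv (LinearMap.ext fun x => ?_)
    exact mem_orthogonal_iff.1 (hH.ge Submodule.mem_top) v (Submodule.mem_span_singleton_self v)
  obtain ⟨w, hwC, hw0, hw⟩ := Submodule.exists_common_eigenvector_of_commute
    (fun g h => (Commute.all g h).map ρ) hC0 (fun g _ hx => C.apply_mem_toSubmodule g hx)
  refine ⟨w, hw, fun hvw => hw0 (Submodule.disjoint_def.1 hC.disjoint w ?_ hwC)⟩
  refine mem_orthogonal_iff.2 fun n hn => ?_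
  obtain ⟨a, rfl⟩ := Submodule.mem_span_singleton.1 hn
  simp [hvw]

theorem Representation.exists_subrepresentation_restrict_nondegenerate [Nontrivial V]
    (hBrefl : B.IsRefl) (hBnd : B.SeparatingLeft)
    (hBinv : ∀ g x y, B (ρ g x) (ρ g y) = B x y) :
    ∃ U : Subrepresentation ρ, U.toSubmodule ≠ ⊥ ∧ finrank ℂ U.toSubmodule ≤ 2 ∧
      (B.restrict U.toSubmodule).Nondegenerate := by
  obtain ⟨v, -, hv0, hv⟩ := Submodule.exists_common_eigenvector_of_commute
    (fun g h => (Commute.all g h).map ρ) (p := ⊤) top_ne_bot (fun _ _ _ => Submodule.mem_top)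
  let L := Subrepresentation.spanSingleton v hv
  have hL0 : L.toSubmodule ≠ ⊥ := Submodule.span_singleton_eq_bot.not.2 hv0
  by_cases hvv : B v v = 0
  · obtain ⟨w, hw, hvw⟩ := ρ.exists_eigenvector_apply_ne_zero hBinv hv
      fun h => hv0 (hBnd v fun y => by rw [h, LinearMap.zero_apply])
    have hspan : (L ⊔ Subrepresentation.spanSingleton w hw).toSubmodule =
        Submodule.span ℂ {v, w} := (Submodule.span_insert v {w}).symm
    refine ⟨L ⊔ Subrepresentation.spanSingleton w hw, ne_bot_of_le_ne_bot hL0 le_sup_left,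
      ?_, ?_⟩
    · exact (Submodule.finrank_add_le_finrank_add_finrank _ _).trans
        (add_le_add (finrank_span_le_card {v}) (finrank_span_le_card {w}))
    · rw [hspan]
      exact nondegenerate_restrict_span_pair hBrefl hvv hvw
  · exact ⟨L, hL0, (finrank_span_singleton hv0).le.trans one_le_two,
      B.nondegenerate_restrict_of_disjoint_orthogonal hBrefl
        (disjoint_iff.2 (span_singleton_inf_orthogonal_eq_bot hvv))⟩

end CommGroup

theorem finrank_le_two_mul_finrank_invariantSymmBilinForms {G : Type*} [CommGroup G] [Finite G]
    {V : Type*} [AddCommGroup V] [Module ℂ V] [FiniteDimensional ℂ V]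
    (ρ : Representation ℂ G V) (B : BilinForm ℂ V) (hBsymm : B.IsSymm) (hBnd : B.Nondegenerate)
    (hBinv : ∀ g x y, B (ρ g x) (ρ g y) = B x y) :
    finrank ℂ V ≤ 2 * finrank ℂ (invariantSymmBilinForms G V ρ) := by
  induction hn : finrank ℂ V using Nat.strong_induction_on generalizing V with
  | _ n ih =>
  rcases subsingleton_or_nontrivial V with hV | hV
  · rw [← hn, finrank_zero_of_subsingleton]
    exact Nat.zero_le _
  obtain ⟨U, hU0, hU2, hUnd⟩ :=
    ρ.exists_subrepresentation_restrict_nondegenerate hBsymm.isRefl hBnd.1 hBinv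
  let U' := U.orthogonal B hBinv
  have hc : IsCompl U.toSubmodule U'.toSubmodule :=
    isCompl_orthogonal_of_restrict_nondegenerate hBsymm.isRefl hUnd
  have hdim := Submodule.finrank_add_eq_of_isCompl hc
  have hU1 := Submodule.one_le_finrank_iff.2 hU0
  have := Submodule.nontrivial_iff_ne_bot.2 hU0
  have hWU := invariantSymmBilinForms.one_le_finrank
    (invariantSymmBilinForms.restrict_mem ⟨hBsymm.eq, hBinv⟩ U) hUnd
  have hWU' := ih _ (by omega) U'.toRepresentation (B.restrict U'.toSubmodule)
    (hBsymm.restrict _) (nondegenerate_restrict_orthogonal hBnd hBsymm.isRefl hUnd)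
    (fun g x y => hBinv g x y) rfl
  have hadd := invariantSymmBilinForms.finrank_add_finrank_le hc
  omega

/-- Let `G` be a finite abelian group, `V` a `d`-dimensional complex vector space,
`ρ : G → GL(V)` a representation, and `B` a nondegenerate symmetric `G`-invariant
bilinear form on `V`.  Then the space of `G`-invariant symmetric bilinear forms on `V`
has dimension at least `d/2` (i.e. twice its dimension is at least `d`). -/
theorem invariant_symmetric_forms_dim_lower_bound
    (G : Type*) [CommGroup G] [Finite G]
    (V : Type*) [AddCommGroup V] [Module ℂ V] [FiniteDimensional ℂ V]
    (d : ℕ) (hd : d = Module.finrank ℂ V)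
    (ρ : G →* (V →ₗ[ℂ] V))
    (B : V →ₗ[ℂ] V →ₗ[ℂ] ℂ)
    (hBsymm : ∀ x y, B x y = B y x)
    (hBnd : ∀ x, (∀ y, B x y = 0) → x = 0)
    (hBinv : ∀ (g : G) (x y : V), B (ρ g x) (ρ g y) = B x y) :
    d ≤ 2 * Module.finrank ℂ ↥(invariantSymmBilinForms G V ρ) := by
  have hB : LinearMap.BilinForm.IsSymm B := ⟨hBsymm⟩
  subst hd
  exact finrank_le_two_mul_finrank_invariantSymmBilinForms ρ B hB
    (hB.isRefl.nondegenerate_iff_separatingLeft.2 hBnd) hBinv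
end
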